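/- arXiv:1709.01436 — 5 statements merged into one kernel-verified Lean document; each statement's English description precedes it below -/
import Mathlib

section
/- Let λ > 0, let (α_n)_{n≥0} satisfy 0 < α_n ≤ 1 for all n, and for n ≥ 0 let p(n,t) = (−1)^n ∑_{k=n}^∞ (−λ)^k ∑_{(k_0,…,k_n) ∈ Θ^k_n} t^{∑_{j=0}^n k_j α_j} / Γ(1 + ∑_{j=0}^n k_j α_j). Then for every s > 0 such that s^{α_k} > λ for all 0 ≤ k ≤ n, the Laplace transform of p(n,·) satisfies ∫₀^∞ p(n,t) e^{−st} dt = λ^n s^{α_0 − 1} / ∏_{k=0}^n (s^{α_k} + λ). -/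
/-!
Each summand of `p(n, t)` is `t ^ a / Γ(1 + a)` with `a = ∑ κ_j α_j`, whose Laplace transform is
`s ^ (-(a + 1)) = s⁻¹ ∏ (s ^ (-α_j)) ^ κ_j`. Integrating termwise (legitimate because the same
series with `|λ|` in place of `-λ` has summable integrals) turns the Laplace transform into `s⁻¹`
times the generating function `∑_k ∑_{κ ∈ Θ^k_n} ∏ z_j ^ κ_j` at `z_j = -λ / s ^ α_j`. That is a
Cauchy product of `n + 1` geometric series, `(1 - z_0)⁻¹ ∏_{j ≥ 1} z_j / (1 - z_j)`, convergent
because `λ < s ^ α_j`.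
-/

open scoped BigOperators

/-- Riemann–Liouville fractional integral of order `α`. -/
noncomputable def rlInt (α : ℝ) (f : ℝ → ℝ) (t : ℝ) : ℝ :=
  (1 / Real.Gamma α) * ∫ s in (0:ℝ)..t, (t - s) ^ (α - 1) * f s

/-- `Theta n k` is the set of tuples `(k_0, …, k_n)` of nonnegative integers with
`k_0 + ⋯ + k_n = k` and `k_j ≥ 1` for `1 ≤ j ≤ n`. -/
def Theta (n k : ℕ) : Finset (Fin (n + 1) → ℕ) :=
  (Finset.Nat.antidiagonalTuple (n + 1) k).filter
    (fun κ => ∀ j : Fin (n + 1), 1 ≤ j.val → 1 ≤ κ j)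

/-- The state probabilities of SDTFPP-I (note that `Theta n k = ∅` for `k < n`,
so the series over all `k : ℕ` agrees with the series starting at `k = n`). -/
noncomputable def pI (lam : ℝ) (α : ℕ → ℝ) (n : ℕ) (t : ℝ) : ℝ :=
  (-1 : ℝ) ^ n * ∑' k : ℕ, (-lam) ^ k *
    ∑ κ ∈ Theta n k,
      t ^ (∑ j, (κ j : ℝ) * α j.val) / Real.Gamma (1 + ∑ j, (κ j : ℝ) * α j.val)

open Finset MeasureTheory Real

theorem Finset.Nat.sum_antidiagonalTuple_succ {M : Type*} [AddCommMonoid M] (n k : ℕ)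
    (g : (Fin (n + 1) → ℕ) → M) :
    ∑ κ ∈ Nat.antidiagonalTuple (n + 1) k, g κ =
      ∑ p ∈ antidiagonal k, ∑ κ ∈ Nat.antidiagonalTuple n p.2, g (Fin.cons p.1 κ) := by
  have hfin : ∀ d m, Nat.antidiagonalTuple d m = finAntidiagonal d m := by
    intro d m; ext; simp [Nat.mem_antidiagonalTuple]
  simp only [hfin]
  rw [finAntidiagonal, finAntidiagonal.aux, sum_disjiUnion]
  simp [finAntidiagonal]

theorem summable_norm_and_tsum_sum_antidiagonalTuple_prod {R : Type*} [NormedCommRing R]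
    [CompleteSpace R] (n : ℕ) (f : Fin n → ℕ → R) (hf : ∀ j, Summable fun m => ‖f j m‖) :
    (Summable fun k => ‖∑ κ ∈ Nat.antidiagonalTuple n k, ∏ j, f j (κ j)‖) ∧
      ∑' k, ∑ κ ∈ Nat.antidiagonalTuple n k, ∏ j, f j (κ j) = ∏ j, ∑' m, f j m := by
  induction n with
  | zero =>
    have hδ : ∀ k, ∑ κ ∈ Nat.antidiagonalTuple 0 k, ∏ j, f j (κ j) = if k = 0 then 1 else 0 := by
      rintro (_ | k) <;> simp
    simp_rw [hδ, Fin.prod_univ_zero, tsum_ite_eq, and_true]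
    exact summable_of_ne_finset_zero (s := {0}) (by simp +contextual)
  | succ n ih =>
    obtain ⟨hs, ht⟩ := ih (fun j => f j.succ) (fun j => hf j.succ)
    have hcons : ∀ k, ∑ κ ∈ Nat.antidiagonalTuple (n + 1) k, ∏ j, f j (κ j) =
        ∑ p ∈ antidiagonal k, f 0 p.1 *
          ∑ κ ∈ Nat.antidiagonalTuple n p.2, ∏ j, f j.succ (κ j) := by
      simp [Nat.sum_antidiagonalTuple_succ, Fin.prod_univ_succ, mul_sum]
    simp_rw [hcons]
    rw [Fin.prod_univ_succ, ← ht]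
    have hs' := summable_norm_sum_mul_antidiagonal_of_summable_norm (hf 0) hs
    have ht' := tsum_mul_tsum_eq_tsum_sum_antidiagonal_of_summable_norm (hf 0) hs
    exact ⟨hs', ht'.symm⟩

theorem tsum_ite_one_le_pow {𝕜 : Type*} [NormedField 𝕜] [CompleteSpace 𝕜] {z : 𝕜}
    (hz : ‖z‖ < 1) : ∑' m : ℕ, (if 1 ≤ m then z ^ m else 0) = z / (1 - z) := by
  rw [tsum_eq_zero_add'
    (by simpa [pow_succ'] using (summable_geometric_of_norm_lt_one hz).mul_left z)]
  simp [pow_succ', tsum_mul_left, tsum_geometric_of_norm_lt_one hz, div_eq_mul_inv]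

theorem summable_norm_and_tsum_sum_Theta_prod {𝕜 : Type*} [NormedField 𝕜] [CompleteSpace 𝕜]
    (n : ℕ) (z : ℕ → 𝕜) (hz : ∀ j ≤ n, ‖z j‖ < 1) :
    (Summable fun k => ‖∑ κ ∈ Theta n k, ∏ j : Fin (n + 1), z j ^ κ j‖) ∧
      ∑' k, ∑ κ ∈ Theta n k, ∏ j : Fin (n + 1), z j ^ κ j =
        (1 - z 0)⁻¹ * ∏ j : Fin n, z (j + 1) / (1 - z (j + 1)) := by
  set f : Fin (n + 1) → ℕ → 𝕜 := fun j m => if 1 ≤ j.val → 1 ≤ m then z j ^ m else 0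
  have hΘ : ∀ k, ∑ κ ∈ Theta n k, ∏ j : Fin (n + 1), z j ^ κ j =
      ∑ κ ∈ Nat.antidiagonalTuple (n + 1) k, ∏ j, f j (κ j) := by
    intro k
    simp only [Theta, sum_filter, f, Fintype.prod_ite_zero]
    congr!
  have hf : ∀ j, Summable fun m => ‖f j m‖ := by
    intro j
    refine (summable_geometric_of_lt_one (norm_nonneg _) (hz j j.is_le)).of_nonneg_of_le
      (fun _ => norm_nonneg _) (fun m => ?_)
    simp only [f]
    split_ifs <;> simp [norm_pow]
  obtain ⟨hs, ht⟩ := summable_norm_and_tsum_sum_antidiagonalTuple_prod _ f hf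
  simp_rw [hΘ]
  refine ⟨hs, ?_⟩
  rw [ht, Fin.prod_univ_succ]
  simp [f, tsum_geometric_of_norm_lt_one (hz 0 n.zero_le), tsum_ite_one_le_pow (hz _ _)]

theorem inv_one_sub_div_mul_prod_div_one_sub_div {𝕜 : Type*} [Field 𝕜] (n : ℕ) (c : 𝕜)
    (u : ℕ → 𝕜) (hu : ∀ j, u j ≠ 0) (huc : ∀ j, u j - c ≠ 0) :
    (1 - c / u 0)⁻¹ * ∏ j : Fin n, c / u (j + 1) / (1 - c / u (j + 1)) =
      c ^ n * u 0 / ∏ j ∈ range (n + 1), (u j - c) := by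
  have hfac : ∀ j, c / u j / (1 - c / u j) = c / (u j - c) := fun j => by
    field_simp [hu j, huc j]
  have h0 : (1 - c / u 0)⁻¹ = u 0 / (u 0 - c) := by
    field_simp [hu 0, huc 0]
  simp_rw [hfac, h0, prod_div_distrib, prod_const, card_univ, Fintype.card_fin,
    Fin.prod_univ_eq_prod_range (fun j => u (j + 1) - c), prod_range_succ' _ n]
  field_simp [huc 0, prod_ne_zero_iff.mpr fun j _ => huc (j + 1)]

theorem integral_rpow_div_Gamma_mul_exp_neg_mul {a s : ℝ} (ha : -1 < a) (hs : 0 < s) :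
    ∫ t in Set.Ioi 0, t ^ a / Gamma (1 + a) * exp (-(s * t)) = (s ^ (a + 1))⁻¹ := by
  have h := integral_rpow_mul_exp_neg_mul_Ioi (neg_lt_iff_pos_add.mp ha) hs
  simp only [add_sub_cancel_right] at h
  simp_rw [div_mul_eq_mul_div, integral_div, h, add_comm 1 a,
    mul_div_cancel_right₀ _ (Gamma_pos_of_pos (neg_lt_iff_pos_add.mp ha)).ne',
    div_rpow zero_le_one hs.le, one_rpow, one_div]

theorem integrableOn_rpow_div_Gamma_mul_exp_neg_mul {a s : ℝ} (ha : -1 < a) (hs : 0 < s) :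
    IntegrableOn (fun t => t ^ a / Gamma (1 + a) * exp (-(s * t))) (Set.Ioi 0) :=
  Integrable.of_integral_ne_zero <| by
    rw [integral_rpow_div_Gamma_mul_exp_neg_mul ha hs]; positivity

theorem inv_rpow_sum_mul_add_one {ι : Type*} (S : Finset ι) (κ : ι → ℕ) (α : ι → ℝ) {s : ℝ}
    (hs : 0 < s) :
    (s ^ (∑ j ∈ S, (κ j : ℝ) * α j + 1))⁻¹ = s⁻¹ * ∏ j ∈ S, ((s ^ α j)⁻¹) ^ κ j := by
  rw [rpow_add_one hs.ne', rpow_sum_of_pos hs, mul_inv, mul_comm, ← prod_inv_distrib]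
  congr 1
  refine prod_congr rfl fun j _ => ?_
  rw [mul_comm, rpow_mul hs.le, rpow_natCast, inv_pow]

theorem norm_div_rpow_lt_one {c s a : ℝ} (hs : 0 < s) (hc : |c| < s ^ a) : ‖c / s ^ a‖ < 1 := by
  rwa [norm_div, norm_eq_abs, norm_of_nonneg (rpow_nonneg hs.le _),
    div_lt_one (rpow_pos_of_pos hs _)]

noncomputable def thetaSeriesTerm (c : ℝ) (α : ℕ → ℝ) (n k : ℕ) (t : ℝ) : ℝ :=
  c ^ k * ∑ κ ∈ Theta n k,
    t ^ (∑ j, (κ j : ℝ) * α j.val) / Gamma (1 + ∑ j, (κ j : ℝ) * α j.val)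

theorem pI_eq_tsum_thetaSeriesTerm (lam : ℝ) (α : ℕ → ℝ) (n : ℕ) (t : ℝ) :
    pI lam α n t = (-1) ^ n * ∑' k, thetaSeriesTerm (-lam) α n k t :=
  rfl

section thetaSeriesTerm

variable {α : ℕ → ℝ} {s : ℝ}

theorem neg_one_lt_sum_natCast_mul (hα : ∀ m, 0 ≤ α m) {n : ℕ} (κ : Fin (n + 1) → ℕ) :
    -1 < ∑ j, (κ j : ℝ) * α j.val :=
  neg_one_lt_zero.trans_le (sum_nonneg fun j _ => mul_nonneg (Nat.cast_nonneg _) (hα j))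

theorem integrableOn_thetaSeriesTerm_mul_exp (hα : ∀ m, 0 ≤ α m) (hs : 0 < s) (c : ℝ)
    (n k : ℕ) :
    IntegrableOn (fun t => thetaSeriesTerm c α n k t * exp (-(s * t))) (Set.Ioi 0) := by
  simp_rw [thetaSeriesTerm, mul_assoc, sum_mul]
  exact (integrable_finsetSum _ fun κ _ =>
    integrableOn_rpow_div_Gamma_mul_exp_neg_mul (neg_one_lt_sum_natCast_mul hα κ) hs).const_mul _

theorem integral_thetaSeriesTerm_mul_exp (hα : ∀ m, 0 ≤ α m) (hs : 0 < s) (c : ℝ)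
    (n k : ℕ) :
    ∫ t in Set.Ioi 0, thetaSeriesTerm c α n k t * exp (-(s * t)) =
      s⁻¹ * ∑ κ ∈ Theta n k, ∏ j : Fin (n + 1), (c / s ^ α j) ^ κ j := by
  simp_rw [thetaSeriesTerm, mul_assoc, sum_mul, integral_const_mul]
  rw [integral_finsetSum _ fun κ _ =>
      integrableOn_rpow_div_Gamma_mul_exp_neg_mul (neg_one_lt_sum_natCast_mul hα κ) hs,
    mul_sum, mul_sum]
  refine sum_congr rfl fun κ hκ => ?_
  have hk : ∑ j, κ j = k := by
    simpa [Theta, Nat.mem_antidiagonalTuple] using (mem_filter.mp hκ).1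
  rw [integral_rpow_div_Gamma_mul_exp_neg_mul (neg_one_lt_sum_natCast_mul hα κ) hs,
    inv_rpow_sum_mul_add_one _ _ _ hs, ← hk, ← prod_pow_eq_pow_sum, mul_left_comm,
    ← prod_mul_distrib]
  simp_rw [← mul_pow, div_eq_mul_inv]

theorem norm_thetaSeriesTerm (hα : ∀ m, 0 ≤ α m) (c : ℝ) (n k : ℕ) {t : ℝ} (ht : 0 ≤ t) :
    ‖thetaSeriesTerm c α n k t‖ = thetaSeriesTerm |c| α n k t := by
  have hΓ : ∀ κ : Fin (n + 1) → ℕ, 0 < Gamma (1 + ∑ j, (κ j : ℝ) * α j.val) := fun κ =>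
    Gamma_pos_of_pos (neg_lt_iff_pos_add'.mp (neg_one_lt_sum_natCast_mul hα κ))
  rw [thetaSeriesTerm, thetaSeriesTerm, norm_mul, norm_pow, norm_eq_abs,
    norm_of_nonneg (sum_nonneg fun κ _ => div_nonneg (rpow_nonneg ht _) (hΓ κ).le)]

theorem summable_integral_norm_thetaSeriesTerm_mul_exp (hα : ∀ m, 0 ≤ α m) (hs : 0 < s)
    (c : ℝ) (n : ℕ) (hc : ∀ j ≤ n, |c| < s ^ α j) :
    Summable fun k => ∫ t in Set.Ioi 0, ‖thetaSeriesTerm c α n k t * exp (-(s * t))‖ := by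
  have hnorm : ∀ k, ∫ t in Set.Ioi 0, ‖thetaSeriesTerm c α n k t * exp (-(s * t))‖ =
      ∫ t in Set.Ioi 0, thetaSeriesTerm |c| α n k t * exp (-(s * t)) := fun k =>
    setIntegral_congr_fun measurableSet_Ioi fun t ht => by
      rw [norm_mul, norm_thetaSeriesTerm hα c n k (le_of_lt ht), norm_of_nonneg (exp_pos _).le]
  simp_rw [hnorm, integral_thetaSeriesTerm_mul_exp hα hs]
  have hz : ∀ j ≤ n, ‖|c| / s ^ α j‖ < 1 := fun j hj =>
    norm_div_rpow_lt_one hs (by rw [abs_abs]; exact hc j hj)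
  exact (summable_norm_and_tsum_sum_Theta_prod n _ hz).1.of_norm.mul_left s⁻¹

end thetaSeriesTerm

/-- Laplace transform of the state probabilities of SDTFPP-I. -/
theorem sdtfppI_laplace_transform (lam : ℝ) (hlam : 0 < lam)
    (α : ℕ → ℝ) (hα : ∀ m, 0 < α m ∧ α m ≤ 1)
    (n : ℕ) (s : ℝ) (hs : 0 < s) (hsk : ∀ k ≤ n, lam < s ^ α k) :
    ∫ t in Set.Ioi (0:ℝ), pI lam α n t * Real.exp (-(s * t))
      = lam ^ n * s ^ (α 0 - 1) / ∏ k ∈ Finset.range (n + 1), (s ^ α k + lam) := by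
  have hα₀ : ∀ m, 0 ≤ α m := fun m => (hα m).1.le
  have hlam' : ∀ j ≤ n, |-lam| < s ^ α j := by simpa [abs_of_pos hlam] using hsk
  have hz : ∀ j ≤ n, ‖-lam / s ^ α j‖ < 1 := fun j hj => norm_div_rpow_lt_one hs (hlam' j hj)
  calc ∫ t in Set.Ioi 0, pI lam α n t * exp (-(s * t))
      = (-1) ^ n * ∫ t in Set.Ioi 0, ∑' k, thetaSeriesTerm (-lam) α n k t * exp (-(s * t)) := by
        simp_rw [pI_eq_tsum_thetaSeriesTerm, mul_assoc, ← tsum_mul_right, integral_const_mul]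
    _ = (-1) ^ n * (s⁻¹ * ∑' k, ∑ κ ∈ Theta n k, ∏ j : Fin (n + 1), (-lam / s ^ α j) ^ κ j) := by
        rw [← integral_tsum_of_summable_integral_norm
          (integrableOn_thetaSeriesTerm_mul_exp hα₀ hs (-lam) n)
          (summable_integral_norm_thetaSeriesTerm_mul_exp hα₀ hs (-lam) n hlam')]
        simp_rw [integral_thetaSeriesTerm_mul_exp hα₀ hs, tsum_mul_left]
    _ = (-1) ^ n * (s⁻¹ * ((-lam) ^ n * s ^ α 0 / ∏ k ∈ range (n + 1), (s ^ α k - -lam))) := by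
        rw [(summable_norm_and_tsum_sum_Theta_prod n _ hz).2,
          inv_one_sub_div_mul_prod_div_one_sub_div n (-lam) (fun j => s ^ α j)
            (fun j => (rpow_pos_of_pos hs _).ne') (fun j => by
              rw [sub_neg_eq_add]; exact (add_pos (rpow_pos_of_pos hs _) hlam).ne')]
    _ = lam ^ n * s ^ (α 0 - 1) / ∏ k ∈ range (n + 1), (s ^ α k + lam) := by
        have hsign : (-1 : ℝ) ^ n * (-lam) ^ n = lam ^ n := by rw [← mul_pow, neg_one_mul, neg_neg]
        simp_rw [sub_neg_eq_add, rpow_sub_one hs.ne', ← hsign]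
        ring
end

section
/- Let (λ_n)_{n≥1} be positive reals and let (ν_n)_{n≥1} satisfy 0 < ν_n ≤ 1 for all n. For n ≥ 1 and t ≥ 0 define r(n,t) = (−1)^{n−1} (λ_1/λ_n) ∑_{k=n−1}^∞ (−1)^k ∑_{(k_1,…,k_n) ∈ Λ^k_n} ( t^{∑_{j=1}^n k_j ν_j} ∏_{j=1}^n λ_j^{k_j} ) / Γ(1 + ∑_{j=1}^n k_j ν_j), and set r(0,t) = 0. Then for every n ≥ 1 and every t ≥ 0, r(n,t) = [n=1] + (I^{ν_n}_t ( −λ_n r(n,·) + λ_{n−1} r(n−1,·) ))(t), where [n=1] equals 1 if n = 1 and 0 otherwise, and λ_0 is irrelevant since r(0,·) = 0. (In particular r(1,0) = 1 and r(n,0) = 0 for n ≥ 2.) -/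
open scoped BigOperators

/-- `Lambda n k` is the set of tuples `(k_1, …, k_n)` of nonnegative integers with
`k_1 + ⋯ + k_n = k` and `k_j ≥ 1` for `2 ≤ j ≤ n` (`k_1` may be `0`); the coordinate
`j : Fin n` represents the index `j + 1 ∈ {1, …, n}`. -/
def Lambda (n k : ℕ) : Finset (Fin n → ℕ) :=
  (Finset.Nat.antidiagonalTuple n k).filter
    (fun κ => ∀ j : Fin n, 1 ≤ j.val → 1 ≤ κ j)

/-- The state probabilities of the state dependent fractional pure birth process
(note that `Lambda n k = ∅` for `k < n - 1`, so the series over all `k : ℕ` agrees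
with the series starting at `k = n - 1`). -/
noncomputable def rBirth (lam : ℕ → ℝ) (ν : ℕ → ℝ) (n : ℕ) (t : ℝ) : ℝ :=
  (-1 : ℝ) ^ (n - 1) * (lam 1 / lam n) * ∑' k : ℕ, (-1 : ℝ) ^ k *
    ∑ κ ∈ Lambda n k,
      (t ^ (∑ j, (κ j : ℝ) * ν (j.val + 1)) * ∏ j, lam (j.val + 1) ^ (κ j)) /
        Real.Gamma (1 + ∑ j, (κ j : ℝ) * ν (j.val + 1))

/-!
Write `r(n,t) = (-1)^(n-1) (λ₁/λₙ) ∑ₖ (-1)^k S(n,k,t)`, where `S(n,k,·)` is the finite sum over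
`Λ^k_n`. Each of its summands is a multiple of `t^w / Γ(1 + w)`, and the Beta integral shows that
`I^α` sends this to `t^(w+α) / Γ(1 + w + α)`. Splitting `Λ^(k+1)_n` according to whether the last
coordinate equals `1` gives `S(n,k+1,·) = λₙ I^(νₙ) (S(n,k,·) + S(n-1,k,·))` for `n ≥ 2`, and
`S(1,k+1,·) = λ₁ I^(ν₁) S(1,k,·)`; so the series for the right-hand side is the series for `r(n,·)`
with its `k = 0` term, which is `[n = 1]`, removed. Integrating termwise is legitimate because
`Γ(1 + w) ≥ R^w e^(-R)` for every `R > 0`, which makes `∑ₖ S(n,k,t)` converge geometrically.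
-/

open Real MeasureTheory Filter Topology

section RiemannLiouville

open Set

variable {α t : ℝ}

lemma intervalIntegrable_rpow_sub_mul (hα : 0 < α) {f : ℝ → ℝ} (hf : ContinuousOn f (uIcc 0 t)) :
    IntervalIntegrable (fun s => (t - s) ^ (α - 1) * f s) volume 0 t := by
  have hker : IntervalIntegrable (fun s => (t - s) ^ (α - 1)) volume 0 t := by
    simpa using (intervalIntegral.intervalIntegrable_rpow' (a := t) (b := 0)
      (r := α - 1) (by linarith)).comp_sub_left t
  exact hker.mul_continuousOn hf

lemma rlInt_const_mul (c : ℝ) (f : ℝ → ℝ) :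
    rlInt α (fun s => c * f s) t = c * rlInt α f t := by
  simp only [rlInt, mul_left_comm _ c, intervalIntegral.integral_const_mul]

lemma rlInt_add {f g : ℝ → ℝ}
    (hf : IntervalIntegrable (fun s => (t - s) ^ (α - 1) * f s) volume 0 t)
    (hg : IntervalIntegrable (fun s => (t - s) ^ (α - 1) * g s) volume 0 t) :
    rlInt α (fun s => f s + g s) t = rlInt α f t + rlInt α g t := by
  simp only [rlInt, mul_add, intervalIntegral.integral_add hf hg]

lemma rlInt_finsetSum {ι : Type*} {s : Finset ι} {f : ι → ℝ → ℝ}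
    (hf : ∀ i ∈ s, IntervalIntegrable (fun u => (t - u) ^ (α - 1) * f i u) volume 0 t) :
    rlInt α (fun u => ∑ i ∈ s, f i u) t = ∑ i ∈ s, rlInt α (f i) t := by
  simp only [rlInt, Finset.mul_sum, intervalIntegral.integral_finsetSum hf]

lemma rlInt_congr {f g : ℝ → ℝ} (ht : 0 ≤ t) (h : EqOn f g (Icc 0 t)) :
    rlInt α f t = rlInt α g t := by
  unfold rlInt
  congr 1
  refine intervalIntegral.integral_congr fun s hs => ?_
  rw [uIcc_of_le ht] at hs
  simp only [h hs]

lemma rlInt_tsum {F : ℕ → ℝ → ℝ} (ht : 0 ≤ t)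
    (hF : ∀ k, IntervalIntegrable (fun s => (t - s) ^ (α - 1) * F k s) volume 0 t)
    (hsum : Summable fun k => ∫ s in 0..t, ‖(t - s) ^ (α - 1) * F k s‖) :
    rlInt α (fun s => ∑' k, F k s) t = ∑' k, rlInt α (F k) t := by
  simp only [intervalIntegral.integral_of_le ht] at hsum
  simp only [rlInt, tsum_mul_left, intervalIntegral.integral_of_le ht]
  rw [integral_tsum_of_summable_integral_norm (fun k => (hF k).1) hsum]
  simp only [tsum_mul_left]

lemma integral_rpow_sub_mul_rpow {b : ℝ} (hα : 0 < α) (hb : -1 < b) (ht : 0 < t) :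
    ∫ s in 0..t, (t - s) ^ (α - 1) * s ^ b
      = Gamma (b + 1) * Gamma α / Gamma (b + 1 + α) * t ^ (b + α) := by
  have hβ := Complex.betaIntegral_scaled (b + 1 : ℝ) α ht
  rw [Complex.betaIntegral_eq_Gamma_mul_div _ _ (by rw [Complex.ofReal_re]; linarith)
    (by simpa using hα)] at hβ
  simp only [← Complex.ofReal_add, Complex.Gamma_ofReal] at hβ
  have hcast : ∫ s in 0..t, ((s : ℂ) ^ ((b + 1 : ℝ) - 1 : ℂ) * ((t : ℂ) - s) ^ ((α : ℂ) - 1))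
      = ((∫ s in 0..t, (t - s) ^ (α - 1) * s ^ b : ℝ) : ℂ) := by
    rw [← intervalIntegral.integral_ofReal]
    refine intervalIntegral.integral_congr fun s hs => ?_
    rw [uIcc_of_le ht.le] at hs
    rw [Complex.ofReal_mul, Complex.ofReal_cpow (sub_nonneg.2 hs.2), Complex.ofReal_cpow hs.1]
    push_cast
    ring_nf
  have hexp : ((b + 1 + α : ℝ) : ℂ) - 1 = ((b + α : ℝ) : ℂ) := by push_cast; ring
  rw [hcast, hexp, ← Complex.ofReal_cpow ht.le] at hβ
  rw [mul_comm]
  exact_mod_cast hβ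

lemma rlInt_rpow {b : ℝ} (hα : 0 < α) (hb : 0 ≤ b) (ht : 0 ≤ t) :
    rlInt α (fun s => s ^ b) t = Gamma (b + 1) / Gamma (b + α + 1) * t ^ (b + α) := by
  rcases ht.eq_or_lt with rfl | ht
  · simp [rlInt, zero_rpow (by positivity : b + α ≠ 0)]
  have hΓ : Gamma α ≠ 0 := (Gamma_pos_of_pos hα).ne'
  rw [rlInt, integral_rpow_sub_mul_rpow hα (by linarith) ht, add_right_comm]
  field_simp

lemma rlInt_rpow_mul_div_Gamma {b : ℝ} (c : ℝ) (hα : 0 < α) (hb : 0 ≤ b) (ht : 0 ≤ t) :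
    rlInt α (fun s => s ^ b * c / Gamma (1 + b)) t
      = t ^ (b + α) * c / Gamma (1 + (b + α)) := by
  have hΓ : Gamma (b + 1) ≠ 0 := (Gamma_pos_of_pos (by linarith)).ne'
  have hfun : (fun s => s ^ b * c / Gamma (1 + b)) = fun s => c / Gamma (b + 1) * s ^ b := by
    ext s
    rw [add_comm]
    ring
  rw [hfun, rlInt_const_mul, rlInt_rpow hα hb ht, add_comm 1, add_right_comm]
  field_simp

lemma mul_rlInt_tsum_alternating {α t c : ℝ} {a : ℕ → ℝ} {g : ℕ → ℝ → ℝ} (hα : 0 < α)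
    (ht : 0 ≤ t) (hc : c ≠ 0) (hg : ∀ k, ContinuousOn (g k) (Icc 0 t))
    (hg0 : ∀ k, ∀ s ∈ Icc 0 t, 0 ≤ g k s) (ha : Summable fun k => |a k|)
    (hstep : ∀ k, c * rlInt α (g k) t = a (k + 1)) :
    c * rlInt α (fun s => ∑' k, (-1) ^ k * g k s) t = a 0 - ∑' k, (-1) ^ k * a k := by
  have hrl : ∀ k, rlInt α (g k) t = a (k + 1) / c := fun k => by
    rw [← hstep k, mul_div_cancel_left₀ _ hc]
  have hint : ∀ k, IntervalIntegrable (fun s => (t - s) ^ (α - 1) * ((-1) ^ k * g k s))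
      volume 0 t := fun k =>
    intervalIntegrable_rpow_sub_mul hα (continuousOn_const.mul (uIcc_of_le ht ▸ hg k))
  have hnorm : ∀ k, ∫ s in 0..t, ‖(t - s) ^ (α - 1) * ((-1) ^ k * g k s)‖
      = Gamma α * (a (k + 1) / c) := fun k => by
    rw [← hrl, rlInt, ← mul_assoc, mul_one_div_cancel (Gamma_pos_of_pos hα).ne', one_mul]
    refine intervalIntegral.integral_congr fun s hs => ?_
    rw [uIcc_of_le ht] at hs
    simp only [norm_mul, norm_pow, norm_neg, norm_one, one_pow, one_mul,
      norm_of_nonneg (rpow_nonneg (sub_nonneg.2 hs.2) _), norm_of_nonneg (hg0 k s hs)]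
  have hsum : Summable fun k => ∫ s in 0..t, ‖(t - s) ^ (α - 1) * ((-1) ^ k * g k s)‖ := by
    simp_rw [hnorm]
    exact (((summable_nat_add_iff 1).2 ha.of_abs).div_const c).mul_left _
  have halt : Summable fun k => (-1) ^ k * a k := Summable.of_abs (by simpa [abs_mul] using ha)
  rw [rlInt_tsum ht hint hsum, halt.tsum_eq_zero_add, ← tsum_mul_left]
  simp only [rlInt_const_mul, hrl, pow_succ, pow_zero, one_mul]
  rw [sub_add_cancel_left, ← tsum_neg]
  exact tsum_congr fun k => by field_simp

end RiemannLiouville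

open Finset

section Lambda

lemma mem_Lambda {n k : ℕ} {κ : Fin n → ℕ} :
    κ ∈ Lambda n k ↔ ∑ j, κ j = k ∧ ∀ j : Fin n, 1 ≤ j.val → 1 ≤ κ j := by
  simp [Lambda, Finset.Nat.mem_antidiagonalTuple]

lemma Lambda_one (k : ℕ) : Lambda 1 k = {fun _ => k} := by
  ext κ
  simp [mem_Lambda, funext_iff, Fin.forall_fin_one]

lemma Lambda_zero_of_two_le {n : ℕ} (hn : 2 ≤ n) : Lambda n 0 = ∅ := by
  ext κ
  simp only [mem_Lambda, Finset.sum_eq_zero_iff, Finset.mem_univ, true_implies,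
    Finset.notMem_empty, iff_false, not_and]
  intro h0 h1
  have := h1 ⟨1, hn⟩ le_rfl
  simp_all

lemma card_Lambda_le (n k : ℕ) : #(Lambda n k) ≤ (k + 1) ^ n := by
  have hsub : Lambda n k ⊆ Fintype.piFinset fun _ => range (k + 1) := by
    intro κ hκ
    simp only [Fintype.mem_piFinset, mem_range, Nat.lt_succ_iff]
    intro j
    rw [← (mem_Lambda.1 hκ).1]
    exact single_le_sum (fun _ _ => Nat.zero_le _) (mem_univ j)
  simpa using card_le_card hsub

lemma sum_add_single_last {m : ℕ} (κ : Fin (m + 1) → ℕ) :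
    ∑ j, (κ + Pi.single (Fin.last m) 1 : Fin (m + 1) → ℕ) j = ∑ j, κ j + 1 := by
  simp [sum_add_distrib]

lemma Lambda_succ_eq_union {m k : ℕ} (hm : 1 ≤ m) :
    Lambda (m + 1) (k + 1)
      = (Lambda (m + 1) k).image (· + Pi.single (Fin.last m) 1)
        ∪ (Lambda m k).image (Fin.snoc · 1) := by
  have hlast : 1 ≤ (Fin.last m).val := hm
  ext κ'
  simp only [mem_union, mem_image, mem_Lambda]
  constructor
  · rintro ⟨hsum, hpos⟩
    rcases (hpos _ hlast).eq_or_lt with h1 | h2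
    · have hsnoc : (Fin.snoc (Fin.init κ') 1 : Fin (m + 1) → ℕ) = κ' :=
        (congrArg (Fin.snoc (Fin.init κ')) h1).trans (Fin.snoc_init_self κ')
      refine Or.inr ⟨Fin.init κ', ⟨?_, fun j hj => hpos _ hj⟩, hsnoc⟩
      rw [Fin.sum_univ_castSucc, ← h1] at hsum
      simpa [Fin.init] using hsum
    · have hle : Pi.single (Fin.last m) 1 ≤ κ' := fun j => by
        rcases eq_or_ne j (Fin.last m) with rfl | hj
        · simpa using h2.le
        · simp [hj]
      refine Or.inl ⟨κ' - Pi.single (Fin.last m) 1, ⟨?_, fun j hj => ?_⟩, tsub_add_cancel_of_le hle⟩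
      · have := sum_add_single_last (κ' - Pi.single (Fin.last m) 1)
        rw [tsub_add_cancel_of_le hle] at this
        omega
      · rcases eq_or_ne j (Fin.last m) with rfl | hj'
        · rw [Pi.sub_apply, Pi.single_eq_same]
          omega
        · simpa [Pi.single_apply, hj'] using hpos j hj
  · rintro (⟨κ, ⟨hsum, hpos⟩, rfl⟩ | ⟨σ, ⟨hsum, hpos⟩, rfl⟩)
    · exact ⟨by rw [sum_add_single_last, hsum], fun j hj => (hpos j hj).trans (by simp)⟩
    · refine ⟨by simp [Fin.sum_univ_castSucc, hsum], fun j hj => ?_⟩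
      induction j using Fin.lastCases with
      | last => simp
      | cast i => simpa using hpos i (by simpa using hj)

lemma sum_Lambda_succ {M : Type*} [AddCommMonoid M] {m k : ℕ} (hm : 1 ≤ m)
    (f : (Fin (m + 1) → ℕ) → M) :
    ∑ κ ∈ Lambda (m + 1) (k + 1), f κ
      = ∑ κ ∈ Lambda (m + 1) k, f (κ + Pi.single (Fin.last m) 1)
        + ∑ σ ∈ Lambda m k, f (Fin.snoc σ 1) := by
  have hdisj : Disjoint ((Lambda (m + 1) k).image (· + Pi.single (Fin.last m) 1))
      ((Lambda m k).image (Fin.snoc · 1)) := by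
    simp only [disjoint_left, mem_image, not_exists, not_and]
    rintro _ ⟨κ, hκ, rfl⟩ σ - h
    have := congrFun h (Fin.last m)
    have := (mem_Lambda.1 hκ).2 (Fin.last m) hm
    simp_all
  rw [Lambda_succ_eq_union hm, sum_union hdisj,
    sum_image fun _ _ _ _ h => add_right_cancel h,
    sum_image fun _ _ _ _ h => Fin.snoc_injective2 h |>.1]

end Lambda

section BirthSum

variable (lam ν : ℕ → ℝ)

noncomputable def nuWeight {n : ℕ} (κ : Fin n → ℕ) : ℝ := ∑ j, (κ j : ℝ) * ν (j.val + 1)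

noncomputable def lamMonomial {n : ℕ} (κ : Fin n → ℕ) : ℝ := ∏ j, lam (j.val + 1) ^ κ j

noncomputable def birthSum (n k : ℕ) (t : ℝ) : ℝ :=
  ∑ κ ∈ Lambda n k, (t ^ nuWeight ν κ * lamMonomial lam κ) / Gamma (1 + nuWeight ν κ)

lemma rBirth_eq_tsum (n : ℕ) (t : ℝ) :
    rBirth lam ν n t
      = (-1) ^ (n - 1) * (lam 1 / lam n) * ∑' k, (-1) ^ k * birthSum lam ν n k t :=
  rfl

variable {lam ν}

lemma nuWeight_add_single_last {m : ℕ} (κ : Fin (m + 1) → ℕ) :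
    nuWeight ν (κ + Pi.single (Fin.last m) 1) = nuWeight ν κ + ν (m + 1) := by
  simp [nuWeight, add_mul, sum_add_distrib, Pi.single_apply]

lemma lamMonomial_add_single_last {m : ℕ} (κ : Fin (m + 1) → ℕ) :
    lamMonomial lam (κ + Pi.single (Fin.last m) 1) = lamMonomial lam κ * lam (m + 1) := by
  simp [lamMonomial, Fin.prod_univ_castSucc, pow_succ, mul_assoc]

lemma nuWeight_snoc_one {m : ℕ} (σ : Fin m → ℕ) :
    nuWeight ν (Fin.snoc σ 1 : Fin (m + 1) → ℕ) = nuWeight ν σ + ν (m + 1) := by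
  simp [nuWeight, Fin.sum_univ_castSucc]

lemma lamMonomial_snoc_one {m : ℕ} (σ : Fin m → ℕ) :
    lamMonomial lam (Fin.snoc σ 1 : Fin (m + 1) → ℕ) = lamMonomial lam σ * lam (m + 1) := by
  simp [lamMonomial, Fin.prod_univ_castSucc]

section Nonneg

variable (hν : ∀ m, 1 ≤ m → 0 ≤ ν m)
include hν

lemma nuWeight_nonneg {n : ℕ} (κ : Fin n → ℕ) : 0 ≤ nuWeight ν κ :=
  sum_nonneg fun _ _ => mul_nonneg (Nat.cast_nonneg _) (hν _ (Nat.le_add_left 1 _))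

lemma continuous_rpow_nuWeight_mul_div {n : ℕ} (κ : Fin n → ℕ) (c : ℝ) :
    Continuous fun s => (s ^ nuWeight ν κ * c) / Gamma (1 + nuWeight ν κ) :=
  ((continuous_rpow_const (nuWeight_nonneg hν κ)).mul continuous_const).div_const _

lemma continuous_birthSum (n k : ℕ) : Continuous (birthSum lam ν n k) :=
  continuous_finsetSum _ fun κ _ => continuous_rpow_nuWeight_mul_div hν κ _

lemma birthSum_nonneg (hlam : ∀ m, 1 ≤ m → 0 ≤ lam m) (n k : ℕ) {t : ℝ} (ht : 0 ≤ t) :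
    0 ≤ birthSum lam ν n k t := by
  refine sum_nonneg fun κ _ => div_nonneg (mul_nonneg (rpow_nonneg ht _)
    (prod_nonneg fun j _ => pow_nonneg (hlam _ (Nat.le_add_left 1 _)) _)) ?_
  exact (Gamma_pos_of_pos (by linarith [nuWeight_nonneg hν κ])).le

lemma rlInt_birthSum {α t : ℝ} (hα : 0 < α) (ht : 0 ≤ t) (n k : ℕ) :
    rlInt α (birthSum lam ν n k) t
      = ∑ κ ∈ Lambda n k, (t ^ (nuWeight ν κ + α) * lamMonomial lam κ)
          / Gamma (1 + (nuWeight ν κ + α)) := by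
  unfold birthSum
  rw [rlInt_finsetSum fun κ _ => intervalIntegrable_rpow_sub_mul hα
    (continuous_rpow_nuWeight_mul_div hν κ _).continuousOn]
  exact sum_congr rfl fun κ _ => rlInt_rpow_mul_div_Gamma _ hα (nuWeight_nonneg hν κ) ht

end Nonneg

end BirthSum

section Recursion

variable {lam ν : ℕ → ℝ}

lemma birthSum_one_zero (t : ℝ) : birthSum lam ν 1 0 t = 1 := by
  simp [birthSum, Lambda_one, nuWeight, lamMonomial]

lemma birthSum_zero_of_two_le {n : ℕ} (hn : 2 ≤ n) (t : ℝ) : birthSum lam ν n 0 t = 0 := by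
  simp [birthSum, Lambda_zero_of_two_le hn]

variable (hν : ∀ m, 1 ≤ m → 0 < ν m) {t : ℝ} (ht : 0 ≤ t)
include hν ht

lemma birthSum_one_succ (k : ℕ) :
    birthSum lam ν 1 (k + 1) t = lam 1 * rlInt (ν 1) (birthSum lam ν 1 k) t := by
  have hw : nuWeight ν (fun _ : Fin 1 => k + 1) = nuWeight ν (fun _ : Fin 1 => k) + ν 1 := by
    simp [nuWeight, add_mul]
  have hp : lamMonomial lam (fun _ : Fin 1 => k + 1)
      = lamMonomial lam (fun _ : Fin 1 => k) * lam 1 := by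
    simp [lamMonomial, pow_succ]
  rw [rlInt_birthSum (fun m hm => (hν m hm).le) (hν 1 le_rfl) ht, birthSum, Lambda_one,
    Lambda_one, sum_singleton, sum_singleton, hw, hp]
  ring

lemma birthSum_succ_succ {m : ℕ} (hm : 1 ≤ m) (k : ℕ) :
    birthSum lam ν (m + 1) (k + 1) t
      = lam (m + 1) * rlInt (ν (m + 1))
          (fun u => birthSum lam ν (m + 1) k u + birthSum lam ν m k u) t := by
  have hν0 : ∀ m, 1 ≤ m → 0 ≤ ν m := fun m hm => (hν m hm).le
  have hα := hν (m + 1) (Nat.le_add_left 1 m)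
  rw [rlInt_add (intervalIntegrable_rpow_sub_mul hα (continuous_birthSum hν0 _ _).continuousOn)
      (intervalIntegrable_rpow_sub_mul hα (continuous_birthSum hν0 _ _).continuousOn),
    rlInt_birthSum hν0 hα ht, rlInt_birthSum hν0 hα ht, birthSum, sum_Lambda_succ hm,
    mul_add, mul_sum, mul_sum]
  congr 1 <;> refine sum_congr rfl fun κ _ => ?_
  · rw [nuWeight_add_single_last, lamMonomial_add_single_last]
    ring
  · rw [nuWeight_snoc_one, lamMonomial_snoc_one]
    ring

end Recursion

section Summability

variable {lam ν : ℕ → ℝ}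

lemma rpow_mul_exp_neg_le_Gamma {x R : ℝ} (hx : 0 ≤ x) (hR : 0 ≤ R) :
    R ^ x * exp (-R) ≤ Gamma (x + 1) := by
  have hint : IntegrableOn (fun u => exp (-u) * u ^ x) (Set.Ioi 0) := by
    simpa using GammaIntegral_convergent (by linarith : 0 < x + 1)
  rw [Gamma_eq_integral (by linarith), add_sub_cancel_right]
  calc R ^ x * exp (-R) = ∫ u in Set.Ioi R, R ^ x * exp (-u) := by
        rw [integral_const_mul, integral_exp_neg_Ioi]
    _ ≤ ∫ u in Set.Ioi R, exp (-u) * u ^ x :=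
        setIntegral_mono_on ((integrableOn_exp_neg_Ioi R).const_mul _)
          (hint.mono_set (Set.Ioi_subset_Ioi hR)) measurableSet_Ioi fun u hu => by
            rw [mul_comm]
            gcongr
            exact hu.le
    _ ≤ ∫ u in Set.Ioi 0, exp (-u) * u ^ x :=
        setIntegral_mono_set hint
          ((ae_restrict_iff' measurableSet_Ioi).2 (Eventually.of_forall fun u hu => by
            have := rpow_nonneg (le_of_lt (Set.mem_Ioi.1 hu)) x
            positivity))
          (Set.Ioi_subset_Ioi hR).eventuallyLE

lemma rpow_nuWeight_mul_lamMonomial (hν : ∀ m, 1 ≤ m → 0 ≤ ν m) {n : ℕ} (κ : Fin n → ℕ)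
    {x : ℝ} (hx : 0 ≤ x) :
    x ^ nuWeight ν κ * lamMonomial lam κ = ∏ j, (lam (j.val + 1) * x ^ ν (j.val + 1)) ^ κ j := by
  rw [nuWeight, lamMonomial, rpow_sum_of_nonneg hx fun j _ =>
    mul_nonneg (Nat.cast_nonneg _) (hν _ (Nat.le_add_left 1 _)), ← prod_mul_distrib]
  refine prod_congr rfl fun j _ => ?_
  rw [mul_comm (κ j : ℝ), rpow_mul_natCast hx, mul_pow, mul_comm]

lemma div_Gamma_le_exp_mul_prod (hlam : ∀ m, 1 ≤ m → 0 ≤ lam m) (hν : ∀ m, 1 ≤ m → 0 ≤ ν m)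
    {n : ℕ} (κ : Fin n → ℕ) {t R : ℝ} (ht : 0 ≤ t) (hR : 0 < R) :
    (t ^ nuWeight ν κ * lamMonomial lam κ) / Gamma (1 + nuWeight ν κ)
      ≤ exp R * ∏ j, (lam (j.val + 1) * (t / R) ^ ν (j.val + 1)) ^ κ j := by
  have hw := nuWeight_nonneg hν κ
  have hP : 0 ≤ lamMonomial lam κ :=
    prod_nonneg fun _ _ => pow_nonneg (hlam _ (Nat.le_add_left 1 _)) _
  have hΓ : R ^ nuWeight ν κ * exp (-R) ≤ Gamma (1 + nuWeight ν κ) := by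
    rw [add_comm]
    exact rpow_mul_exp_neg_le_Gamma hw hR.le
  have hRw : 0 < R ^ nuWeight ν κ := rpow_pos_of_pos hR _
  calc (t ^ nuWeight ν κ * lamMonomial lam κ) / Gamma (1 + nuWeight ν κ)
      ≤ (t ^ nuWeight ν κ * lamMonomial lam κ) / (R ^ nuWeight ν κ * exp (-R)) :=
        div_le_div_of_nonneg_left (mul_nonneg (rpow_nonneg ht _) hP) (by positivity) hΓ
    _ = exp R * ((t / R) ^ nuWeight ν κ * lamMonomial lam κ) := by
        rw [div_rpow ht hR.le, exp_neg]
        field_simp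
    _ = _ := by rw [rpow_nuWeight_mul_lamMonomial hν κ (div_nonneg ht hR.le)]

lemma summable_birthSum (hlam : ∀ m, 1 ≤ m → 0 ≤ lam m) (hν : ∀ m, 1 ≤ m → 0 < ν m)
    (n : ℕ) {t : ℝ} (ht : 0 ≤ t) : Summable fun k => birthSum lam ν n k t := by
  have hν0 : ∀ m, 1 ≤ m → 0 ≤ ν m := fun m hm => (hν m hm).le
  have htend : ∀ j : Fin n,
      Tendsto (fun R => lam (j.val + 1) * (t / R) ^ ν (j.val + 1)) atTop (𝓝 0) := fun j => by
    have hνj := hν (j.val + 1) (Nat.le_add_left 1 _)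
    simpa [zero_rpow hνj.ne'] using
      ((tendsto_const_nhds.div_atTop tendsto_id).rpow_const (Or.inr hνj.le)).const_mul
        (lam (j.val + 1))
  obtain ⟨R, hsmall, hR⟩ := ((eventually_all.2 fun j =>
    (htend j).eventually (ge_mem_nhds (by norm_num : (0 : ℝ) < 1 / 2))).and
      (eventually_gt_atTop 0)).exists
  have hterm : ∀ k, ∀ κ ∈ Lambda n k,
      (t ^ nuWeight ν κ * lamMonomial lam κ) / Gamma (1 + nuWeight ν κ) ≤ exp R * (1 / 2) ^ k := by
    intro k κ hκ
    refine (div_Gamma_le_exp_mul_prod hlam hν0 κ ht hR).trans ?_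
    have hbase : ∀ j : Fin n, 0 ≤ lam (j.val + 1) * (t / R) ^ ν (j.val + 1) := fun j =>
      mul_nonneg (hlam _ (Nat.le_add_left 1 _)) (rpow_nonneg (div_nonneg ht hR.le) _)
    rw [← (mem_Lambda.1 hκ).1, ← prod_pow_eq_pow_sum]
    exact mul_le_mul_of_nonneg_left (prod_le_prod (fun j _ => pow_nonneg (hbase j) _)
      fun j _ => pow_le_pow_left₀ (hbase j) (hsmall j) _) (exp_pos R).le
  have hbound : ∀ k, birthSum lam ν n k t
      ≤ 2 * exp R * (((k + 1 : ℕ) : ℝ) ^ n * (1 / 2) ^ (k + 1)) := by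
    intro k
    calc birthSum lam ν n k t ≤ #(Lambda n k) • (exp R * (1 / 2) ^ k) :=
          sum_le_card_nsmul _ _ _ (hterm k)
      _ ≤ (((k + 1 : ℕ) : ℝ) ^ n) * (exp R * (1 / 2) ^ k) := by
          rw [nsmul_eq_mul]
          gcongr
          exact_mod_cast card_Lambda_le n k
      _ = _ := by ring
  have hgeom : Summable fun k : ℕ => ((k + 1 : ℕ) : ℝ) ^ n * (1 / 2 : ℝ) ^ (k + 1) :=
    (summable_nat_add_iff 1).2 (summable_pow_mul_geometric_of_norm_lt_one (R := ℝ) n (by norm_num))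
  exact Summable.of_nonneg_of_le (fun k => birthSum_nonneg hν0 hlam n k ht) hbound
    (hgeom.mul_left _)

end Summability

section Source

variable {lam ν : ℕ → ℝ}

noncomputable def birthSource (lam ν : ℕ → ℝ) (n k : ℕ) (u : ℝ) : ℝ :=
  birthSum lam ν n k u + if n = 1 then 0 else birthSum lam ν (n - 1) k u

lemma continuous_birthSource (hν : ∀ m, 1 ≤ m → 0 ≤ ν m) (n k : ℕ) :
    Continuous (birthSource lam ν n k) := by
  unfold birthSource
  by_cases hn : n = 1
  · simpa [hn] using continuous_birthSum hν 1 k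
  · simp only [hn, if_false]
    exact (continuous_birthSum hν n k).add (continuous_birthSum hν (n - 1) k)

lemma birthSource_nonneg (hlam : ∀ m, 1 ≤ m → 0 ≤ lam m) (hν : ∀ m, 1 ≤ m → 0 ≤ ν m)
    (n k : ℕ) {u : ℝ} (hu : 0 ≤ u) : 0 ≤ birthSource lam ν n k u := by
  by_cases hn : n = 1 <;> simp [birthSource, hn, birthSum_nonneg hν hlam _ _ hu, add_nonneg]

lemma lam_mul_rlInt_birthSource (hν : ∀ m, 1 ≤ m → 0 < ν m) {t : ℝ} (ht : 0 ≤ t) {n : ℕ}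
    (hn : 1 ≤ n) (k : ℕ) :
    lam n * rlInt (ν n) (birthSource lam ν n k) t = birthSum lam ν n (k + 1) t := by
  obtain ⟨m, rfl⟩ : ∃ m, n = m + 1 := ⟨n - 1, by omega⟩
  rcases Nat.eq_zero_or_pos m with rfl | hm
  · have hsrc : birthSource lam ν 1 k = birthSum lam ν 1 k := funext fun u => by
      simp [birthSource]
    rw [hsrc, birthSum_one_succ hν ht]
  · have hsrc : birthSource lam ν (m + 1) k
        = fun u => birthSum lam ν (m + 1) k u + birthSum lam ν m k u := funext fun u => by
      simp [birthSource, hm.ne']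
    rw [hsrc, birthSum_succ_succ hν ht hm]

lemma summable_neg_one_pow_mul_birthSum (hlam : ∀ m, 1 ≤ m → 0 ≤ lam m)
    (hν : ∀ m, 1 ≤ m → 0 < ν m) (n : ℕ) {u : ℝ} (hu : 0 ≤ u) :
    Summable fun k => (-1) ^ k * birthSum lam ν n k u :=
  Summable.of_abs <| by
    simpa [abs_mul, abs_of_nonneg (birthSum_nonneg (fun m hm => (hν m hm).le) hlam _ _ hu)]
      using summable_birthSum hlam hν n hu

lemma integrand_eq_tsum_birthSource (hlam : ∀ m, 1 ≤ m → 0 < lam m)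
    (hν : ∀ m, 1 ≤ m → 0 < ν m) {n : ℕ} (hn : 1 ≤ n) {u : ℝ} (hu : 0 ≤ u) :
    -(lam n) * rBirth lam ν n u + lam (n - 1) * (if n = 1 then 0 else rBirth lam ν (n - 1) u)
      = (-1) ^ n * lam 1 * ∑' k, (-1) ^ k * birthSource lam ν n k u := by
  have hlam0 : ∀ m, 1 ≤ m → 0 ≤ lam m := fun m hm => (hlam m hm).le
  obtain ⟨m, rfl⟩ : ∃ m, n = m + 1 := ⟨n - 1, by omega⟩
  have hlamn := (hlam (m + 1) (Nat.le_add_left 1 m)).ne'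
  rcases m with _ | p
  · simp [rBirth_eq_tsum, birthSource, hlamn]
  · have hlamp := (hlam (p + 1) (Nat.le_add_left 1 p)).ne'
    simp only [birthSource, rBirth_eq_tsum, mul_add, show p + 1 + 1 ≠ 1 by omega, if_false,
      Nat.add_sub_cancel]
    rw [(summable_neg_one_pow_mul_birthSum hlam0 hν _ hu).tsum_add
      (summable_neg_one_pow_mul_birthSum hlam0 hν _ hu)]
    field_simp
    ring

end Source

/-- The SDFPBP state probabilities solve the Riemann–Liouville integral form of the
governing difference-differential equations. -/
theorem sdfpbp_integral_equation (lam : ℕ → ℝ) (hlam : ∀ m, 1 ≤ m → 0 < lam m)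
    (ν : ℕ → ℝ) (hν : ∀ m, 1 ≤ m → 0 < ν m ∧ ν m ≤ 1)
    (n : ℕ) (hn : 1 ≤ n) (t : ℝ) (ht : 0 ≤ t) :
    rBirth lam ν n t
      = (if n = 1 then (1:ℝ) else 0)
        + rlInt (ν n)
            (fun u => -(lam n) * rBirth lam ν n u
              + lam (n - 1) * (if n = 1 then (0:ℝ) else rBirth lam ν (n - 1) u)) t := by
  have hlam0 : ∀ m, 1 ≤ m → 0 ≤ lam m := fun m hm => (hlam m hm).le
  have hνpos : ∀ m, 1 ≤ m → 0 < ν m := fun m hm => (hν m hm).1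
  have hν0 : ∀ m, 1 ≤ m → 0 ≤ ν m := fun m hm => (hν m hm).1.le
  have hlamn := (hlam n hn).ne'
  have hseries := mul_rlInt_tsum_alternating (hνpos n hn) ht hlamn
    (fun k => (continuous_birthSource hν0 n k).continuousOn)
    (fun k s hs => birthSource_nonneg hlam0 hν0 n k hs.1)
    (summable_birthSum hlam0 hνpos n ht).abs (lam_mul_rlInt_birthSource hνpos ht hn)
  rw [rlInt_congr ht fun u hu => integrand_eq_tsum_birthSource hlam hνpos hn hu.1,
    rlInt_const_mul, rBirth_eq_tsum, eq_div_of_mul_eq hlamn ((mul_comm _ _).trans hseries)]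
  obtain ⟨m, rfl⟩ : ∃ m, n = m + 1 := ⟨n - 1, by omega⟩
  rcases m with _ | p
  · rw [if_pos rfl, birthSum_one_zero]
    field_simp
    ring
  · rw [if_neg (by omega), birthSum_zero_of_two_le (by omega), Nat.add_sub_cancel]
    ring
end

section
/- Let (λ_n)_{n≥1} be positive reals, let (ν_n)_{n≥1} satisfy 0 < ν_n ≤ 1 for all n, and for n ≥ 1 let r(n,t) = (−1)^{n−1} (λ_1/λ_n) ∑_{k=n−1}^∞ (−1)^k ∑_{(k_1,…,k_n) ∈ Λ^k_n} ( t^{∑_{j=1}^n k_j ν_j} ∏_{j=1}^n λ_j^{k_j} ) / Γ(1 + ∑_{j=1}^n k_j ν_j). Then for every s > 0 such that s^{ν_k} > λ_k for all 1 ≤ k ≤ n, the Laplace transform of r(n,·) satisfies ∫₀^∞ r(n,t) e^{−st} dt = s^{ν_1 − 1} ∏_{k=1}^{n−1} λ_k / ∏_{k=1}^n (s^{ν_k} + λ_k). -/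
open scoped BigOperators

/-!
Each summand `t ^ a * ∏ λ_j ^ k_j / Γ(1 + a)`, `a = ∑ k_j ν_j`, of `r(n, ·)` has Laplace transform
`s⁻¹ ∏ (λ_j / s ^ ν_j) ^ k_j`. Since `λ_j < s ^ ν_j`, the same computation with all signs positive
gives a convergent series of `L¹` norms, so the series may be integrated termwise. With
`z_j = -λ_j / s ^ ν_j` the result is `s⁻¹` times the sum of `∏ z_j ^ k_j` over all tuples with
`k_1 ≥ 0` and `k_j ≥ 1` for `j ≥ 2`, a product of geometric series
`1 / (1 - z_1) * ∏_{j ≥ 2} z_j / (1 - z_j)`, which simplifies to the claimed rational function.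
-/

open MeasureTheory Set

theorem summable_norm_prod_and_hasSum_prod {β : Type*} {n : ℕ} {f : Fin n → β → ℝ}
    (hf : ∀ j, Summable fun b => ‖f j b‖) :
    (Summable fun κ : Fin n → β => ‖∏ j, f j (κ j)‖) ∧
      HasSum (fun κ : Fin n → β => ∏ j, f j (κ j)) (∏ j, ∑' b, f j b) := by
  induction n with
  | zero =>
    simp only [Finset.univ_eq_empty, Finset.prod_empty]
    exact ⟨.of_finite, hasSum_unique _⟩
  | succ n ih =>
    obtain ⟨f₀, g, rfl⟩ : ∃ f₀ g, f = Fin.cons f₀ g :=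
      ⟨f 0, Fin.tail f, (Fin.cons_self_tail f).symm⟩
    have hf₀ : Summable fun b => ‖f₀ b‖ := by simpa using hf 0
    obtain ⟨hg_norm, hg⟩ := ih (f := g) fun j => by simpa using hf j.succ
    let e := Fin.consEquiv fun _ : Fin (n + 1) => β
    have hsplit (p : β × (Fin n → β)) :
        ∏ j, (Fin.cons f₀ g : Fin (n + 1) → β → ℝ) j (e p j) = f₀ p.1 * ∏ j, g j (p.2 j) := by
      simp [e, Fin.prod_univ_succ, Fin.consEquiv]
    refine ⟨e.summable_iff.mp ?_, e.hasSum_iff.mp ?_⟩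
    · simpa only [Function.comp_def, hsplit] using hf₀.mul_norm hg_norm
    · rw [Fin.prod_univ_succ, Fin.cons_zero]
      simp only [Fin.cons_succ]
      simpa only [Function.comp_def, hsplit] using
        hf₀.of_norm.hasSum.mul hg (hf₀.mul_norm hg_norm).of_norm

theorem hasSum_ite_le_prod_pow {n : ℕ} (d : Fin n → ℕ) {z : Fin n → ℝ} (hz : ∀ j, ‖z j‖ < 1) :
    HasSum (fun κ : Fin n → ℕ => if ∀ j, d j ≤ κ j then ∏ j, z j ^ κ j else 0)
      (∏ j, z j ^ d j / (1 - z j)) := by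
  have hgeom : HasSum (fun μ : Fin n → ℕ => ∏ j, z j ^ μ j) (∏ j, (1 - z j)⁻¹) := by
    have := (summable_norm_prod_and_hasSum_prod (f := fun j m => z j ^ m) fun j => by
      simpa [norm_pow] using summable_geometric_of_lt_one (norm_nonneg _) (hz j)).2
    simpa only [tsum_geometric_of_norm_lt_one (hz _)] using this
  have hshift : Function.Injective fun μ : Fin n → ℕ => d + μ := add_right_injective d
  rw [← hshift.hasSum_iff]
  · simp only [Function.comp_def, Pi.add_apply, le_add_iff_nonneg_right, zero_le, implies_true,
      if_true, pow_add, Finset.prod_mul_distrib, div_eq_mul_inv]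
    exact hgeom.mul_left _
  · exact fun κ hκ => if_neg fun hle => hκ ⟨κ - d, add_tsub_cancel_of_le hle⟩

theorem HasSum.sum_antidiagonalTuple {M : Type*} [AddCommMonoid M] [TopologicalSpace M]
    [ContinuousAdd M] [RegularSpace M] {n : ℕ} {f : (Fin n → ℕ) → M} {a : M} (hf : HasSum f a) :
    HasSum (fun k => ∑ κ ∈ Finset.Nat.antidiagonalTuple n k, f κ) a := by
  let e : (Σ k, Finset.Nat.antidiagonalTuple n k) ≃ (Fin n → ℕ) :=
    (Equiv.sigmaCongrRight fun k =>
      Equiv.subtypeEquivRight fun κ => Finset.Nat.mem_antidiagonalTuple).trans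
        (Equiv.sigmaFiberEquiv fun κ : Fin n → ℕ => ∑ j, κ j)
  exact (e.hasSum_iff.mpr hf).sigma fun k => (Finset.Nat.antidiagonalTuple n k).hasSum f

theorem hasSum_sum_filter_antidiagonalTuple {n : ℕ} (d : Fin n → ℕ) {z : Fin n → ℝ}
    (hz : ∀ j, ‖z j‖ < 1) :
    HasSum (fun k => ∑ κ ∈ (Finset.Nat.antidiagonalTuple n k).filter (fun κ => ∀ j, d j ≤ κ j),
      ∏ j, z j ^ κ j) (∏ j, z j ^ d j / (1 - z j)) := by
  simpa only [Finset.sum_filter] using (hasSum_ite_le_prod_pow d hz).sum_antidiagonalTuple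

theorem prod_neg_pow_of_mem_antidiagonalTuple {n k : ℕ} {κ : Fin n → ℕ}
    (hκ : κ ∈ Finset.Nat.antidiagonalTuple n k) (z : Fin n → ℝ) :
    ∏ j, (-z j) ^ κ j = (-1) ^ k * ∏ j, z j ^ κ j := by
  simp_rw [neg_pow (z _), Finset.prod_mul_distrib, Finset.prod_pow_eq_pow_sum,
    Finset.Nat.mem_antidiagonalTuple.mp hκ]

theorem integral_rpow_div_Gamma_mul_exp {a s : ℝ} (ha : -1 < a) (hs : 0 < s) :
    ∫ t in Ioi (0 : ℝ), t ^ a / Real.Gamma (1 + a) * Real.exp (-(s * t)) = (1 / s) ^ (1 + a) := by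
  have hΓ : Real.Gamma (1 + a) ≠ 0 := (Real.Gamma_pos_of_pos (by linarith)).ne'
  have h := Real.integral_rpow_mul_exp_neg_mul_Ioi (a := 1 + a) (by linarith) hs
  simp only [add_sub_cancel_left] at h
  simp_rw [div_mul_eq_mul_div, integral_div, h, mul_div_cancel_right₀ _ hΓ]

theorem integrableOn_rpow_div_Gamma_mul_exp {a s : ℝ} (ha : -1 < a) (hs : 0 < s) :
    IntegrableOn (fun t : ℝ => t ^ a / Real.Gamma (1 + a) * Real.exp (-(s * t))) (Ioi 0) := by
  have h : IntegrableOn (fun t : ℝ => t ^ a * Real.exp (-(s * t))) (Ioi 0) := by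
    simpa using integrableOn_rpow_mul_exp_neg_mul_rpow (p := 1) ha one_pos hs
  simp_rw [div_mul_eq_mul_div]
  exact h.div_const _

noncomputable def mittagLefflerTerm {ι : Type*} [Fintype ι] (x α : ι → ℝ) (κ : ι → ℕ) (t : ℝ) : ℝ :=
  (t ^ (∑ j, (κ j : ℝ) * α j) * ∏ j, x j ^ κ j) / Real.Gamma (1 + ∑ j, (κ j : ℝ) * α j)

section MittagLefflerTerm

variable {ι : Type*} [Fintype ι] (x : ι → ℝ) {α : ι → ℝ} (κ : ι → ℕ) {s : ℝ}

theorem sum_natCast_mul_nonneg (hα : ∀ j, 0 ≤ α j) : 0 ≤ ∑ j, (κ j : ℝ) * α j :=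
  Finset.sum_nonneg fun j _ => mul_nonneg (κ j).cast_nonneg (hα j)

theorem mittagLefflerTerm_nonneg (hx : ∀ j, 0 ≤ x j) (hα : ∀ j, 0 ≤ α j) {t : ℝ} (ht : 0 ≤ t) :
    0 ≤ mittagLefflerTerm x α κ t := by
  have := Real.Gamma_pos_of_pos (by linarith [sum_natCast_mul_nonneg κ hα] :
    0 < 1 + ∑ j, (κ j : ℝ) * α j)
  have := Finset.prod_nonneg fun j (_ : j ∈ Finset.univ) => pow_nonneg (hx j) (κ j)
  unfold mittagLefflerTerm
  positivity

theorem mittagLefflerTerm_mul_exp (t : ℝ) :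
    mittagLefflerTerm x α κ t * Real.exp (-(s * t)) = (∏ j, x j ^ κ j) *
      (t ^ (∑ j, (κ j : ℝ) * α j) / Real.Gamma (1 + ∑ j, (κ j : ℝ) * α j) *
        Real.exp (-(s * t))) := by
  simp only [mittagLefflerTerm]; ring

theorem integrableOn_mittagLefflerTerm_mul_exp (hα : ∀ j, 0 ≤ α j) (hs : 0 < s) :
    IntegrableOn (fun t => mittagLefflerTerm x α κ t * Real.exp (-(s * t))) (Ioi 0) := by
  have ha : -1 < ∑ j, (κ j : ℝ) * α j := by linarith [sum_natCast_mul_nonneg κ hα]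
  simp_rw [mittagLefflerTerm_mul_exp]
  exact (integrableOn_rpow_div_Gamma_mul_exp ha hs).const_mul _

theorem integral_mittagLefflerTerm_mul_exp (hα : ∀ j, 0 ≤ α j) (hs : 0 < s) :
    ∫ t in Ioi (0 : ℝ), mittagLefflerTerm x α κ t * Real.exp (-(s * t))
      = 1 / s * ∏ j, (x j / s ^ α j) ^ κ j := by
  have hs' : 0 < 1 / s := one_div_pos.mpr hs
  have hpow (j : ι) : (1 / s) ^ ((κ j : ℝ) * α j) = (1 / s ^ α j) ^ κ j := by
    rw [mul_comm, Real.rpow_mul hs'.le, Real.rpow_natCast, Real.div_rpow zero_le_one hs.le,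
      Real.one_rpow]
  simp_rw [mittagLefflerTerm_mul_exp, integral_const_mul]
  rw [integral_rpow_div_Gamma_mul_exp (by linarith [sum_natCast_mul_nonneg κ hα]) hs,
    Real.rpow_add hs', Real.rpow_one, Real.rpow_sum_of_pos hs']
  simp_rw [hpow, div_eq_mul_one_div (x _), mul_pow, Finset.prod_mul_distrib]
  ring

theorem integral_sum_mittagLefflerTerm_mul_exp (S : Finset (ι → ℕ)) (hα : ∀ j, 0 ≤ α j)
    (hs : 0 < s) :
    ∫ t in Ioi (0 : ℝ), ∑ κ ∈ S, mittagLefflerTerm x α κ t * Real.exp (-(s * t))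
      = 1 / s * ∑ κ ∈ S, ∏ j, (x j / s ^ α j) ^ κ j := by
  rw [integral_finsetSum _ fun κ _ => integrableOn_mittagLefflerTerm_mul_exp x κ hα hs,
    Finset.mul_sum]
  exact Finset.sum_congr rfl fun κ _ => integral_mittagLefflerTerm_mul_exp x κ hα hs

end MittagLefflerTerm

theorem integral_tsum_mittagLefflerTerm_mul_exp {n : ℕ} (d : Fin n → ℕ) {x α : Fin n → ℝ}
    (hx : ∀ j, 0 ≤ x j) (hα : ∀ j, 0 ≤ α j) {s : ℝ} (hs : 0 < s) (hz : ∀ j, x j / s ^ α j < 1) :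
    ∫ t in Ioi (0 : ℝ), (∑' k, (-1 : ℝ) ^ k *
        ∑ κ ∈ (Finset.Nat.antidiagonalTuple n k).filter (fun κ => ∀ j, d j ≤ κ j),
          mittagLefflerTerm x α κ t) * Real.exp (-(s * t))
      = 1 / s * ∏ j, (-(x j / s ^ α j)) ^ d j / (1 + x j / s ^ α j) := by
  set A := fun k => (Finset.Nat.antidiagonalTuple n k).filter (fun κ => ∀ j, d j ≤ κ j)
  set z := fun j => x j / s ^ α j
  have hz0 (j : Fin n) : 0 ≤ z j := div_nonneg (hx j) (Real.rpow_nonneg hs.le _)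
  let H := fun k t => ∑ κ ∈ A k, mittagLefflerTerm x α κ t * Real.exp (-(s * t))
  have hH_int k : Integrable (H k) (volume.restrict (Ioi 0)) :=
    integrable_finsetSum _ fun κ _ => integrableOn_mittagLefflerTerm_mul_exp x κ hα hs
  have hH k : ∫ t in Ioi 0, H k t = 1 / s * ∑ κ ∈ A k, ∏ j, z j ^ κ j :=
    integral_sum_mittagLefflerTerm_mul_exp x (A k) hα hs
  have hH_norm k : ∫ t in Ioi 0, ‖(-1 : ℝ) ^ k * H k t‖ = 1 / s * ∑ κ ∈ A k, ∏ j, z j ^ κ j := by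
    refine (setIntegral_congr_fun measurableSet_Ioi fun t (ht : 0 < t) => ?_).trans (hH k)
    have : 0 ≤ H k t := Finset.sum_nonneg fun κ _ =>
      mul_nonneg (mittagLefflerTerm_nonneg x κ hx hα ht.le) (Real.exp_pos _).le
    simp only [norm_mul, norm_pow, norm_neg, norm_one, one_pow, one_mul, Real.norm_of_nonneg this]
  have hH_signed k : (-1 : ℝ) ^ k * ∫ t in Ioi 0, H k t = 1 / s * ∑ κ ∈ A k, ∏ j, (-z j) ^ κ j := by
    rw [hH k, mul_left_comm, Finset.mul_sum]
    congr 1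
    refine Finset.sum_congr rfl fun κ hκ => ?_
    rw [prod_neg_pow_of_mem_antidiagonalTuple (Finset.mem_filter.mp hκ).1]
  have hsum := hasSum_sum_filter_antidiagonalTuple d (z := z) fun j => by
    rw [Real.norm_of_nonneg (hz0 j)]; exact hz j
  have hsum_neg := hasSum_sum_filter_antidiagonalTuple d (z := fun j => -z j) fun j => by
    rw [norm_neg, Real.norm_of_nonneg (hz0 j)]; exact hz j
  calc _ = ∫ t in Ioi (0 : ℝ), ∑' k, (-1 : ℝ) ^ k * H k t := by
        congr 1 with t
        simp only [H, A, ← tsum_mul_right, Finset.mul_sum, Finset.sum_mul, mul_assoc]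
    _ = ∑' k, (-1 : ℝ) ^ k * ∫ t in Ioi (0 : ℝ), H k t := by
      simp_rw [← integral_const_mul]
      refine (integral_tsum_of_summable_integral_norm (fun k => (hH_int k).const_mul _) ?_).symm
      simpa only [hH_norm] using hsum.summable.mul_left (1 / s)
    _ = _ := by
      rw [tsum_congr hH_signed, (hsum_neg.mul_left (1 / s)).tsum_eq]
      simp only [z, sub_neg_eq_add]

theorem Lambda_eq_filter (n k : ℕ) :
    Lambda n k = (Finset.Nat.antidiagonalTuple n k).filter
      (fun κ => ∀ j : Fin n, min 1 j.val ≤ κ j) :=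
  Finset.filter_congr fun κ _ => forall_congr' fun j => by omega

theorem rBirth_eq_tsum_mittagLefflerTerm (lam ν : ℕ → ℝ) (n : ℕ) (t : ℝ) :
    rBirth lam ν n t = (-1 : ℝ) ^ (n - 1) * (lam 1 / lam n) * ∑' k : ℕ, (-1 : ℝ) ^ k *
      ∑ κ ∈ Lambda n k, mittagLefflerTerm (fun j : Fin n => lam (j + 1)) (fun j => ν (j + 1)) κ t :=
  rfl

theorem prod_Icc_one_eq_prod_fin {M : Type*} [CommMonoid M] (f : ℕ → M) (N : ℕ) :
    ∏ k ∈ Finset.Icc 1 N, f k = ∏ i : Fin N, f (i + 1) := by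
  rw [Fin.prod_univ_eq_prod_range (fun i => f (i + 1)), Finset.range_eq_Ico,
    Finset.prod_Ico_add', zero_add, Finset.Ico_add_one_right_eq_Icc]

theorem sdfpbp_closed_form (lam ν : ℕ → ℝ) (m : ℕ) {s : ℝ} (hs : 0 < s)
    (hlam : ∀ k, 1 ≤ k → 0 < lam k) :
    (-1 : ℝ) ^ m * (lam 1 / lam (m + 1)) * (1 / s * ∏ j : Fin (m + 1),
        (-(lam (j + 1) / s ^ ν (j + 1))) ^ min 1 j.val / (1 + lam (j + 1) / s ^ ν (j + 1)))
      = s ^ (ν 1 - 1) * (∏ k ∈ Finset.Icc 1 m, lam k)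
          / ∏ k ∈ Finset.Icc 1 (m + 1), (s ^ ν k + lam k) := by
  have hp (k : ℕ) : 0 < s ^ ν k := Real.rpow_pos_of_pos hs _
  have hq (k : ℕ) (hk : 1 ≤ k) : 0 < s ^ ν k + lam k := add_pos (hp k) (hlam k hk)
  have htail (i : Fin m) :
      (-(lam (i.succ + 1) / s ^ ν (i.succ + 1))) ^ min 1 i.succ.val /
          (1 + lam (i.succ + 1) / s ^ ν (i.succ + 1))
        = -1 * (lam (i + 2) / (s ^ ν (i + 2) + lam (i + 2))) := by
    have := hp (i + 2)
    have := hq (i + 2) (by omega)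
    simp only [Fin.val_succ, show min 1 (i.val + 1) = 1 by omega, pow_one]
    field_simp
  have hlam_shift : lam 1 * ∏ i : Fin m, lam (i + 2) = lam (m + 1) * ∏ i : Fin m, lam (i + 1) := by
    have h₁ := Fin.prod_univ_succ fun j : Fin (m + 1) => lam (j + 1)
    have h₂ := Fin.prod_univ_castSucc fun j : Fin (m + 1) => lam (j + 1)
    simp only [Fin.val_succ, Fin.val_zero, Fin.val_last, Fin.val_castSucc] at h₁ h₂
    linear_combination h₂ - h₁
  rw [Fin.prod_univ_succ, Finset.prod_congr rfl fun i _ => htail i, prod_Icc_one_eq_prod_fin,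
    prod_Icc_one_eq_prod_fin, Fin.prod_univ_succ, Finset.prod_mul_distrib, Finset.prod_const,
    Finset.prod_div_distrib, Finset.card_univ, Fintype.card_fin]
  simp only [Fin.val_zero, Fin.val_succ, min_eq_right zero_le_one, pow_zero, zero_add, add_assoc,
    Nat.reduceAdd]
  have := hlam (m + 1) (by omega)
  have := hp 1
  have := hq 1 le_rfl
  have : 0 < ∏ i : Fin m, (s ^ ν (i + 2) + lam (i + 2)) :=
    Finset.prod_pos fun i _ => hq (i + 2) (by omega)
  rw [Real.rpow_sub hs, Real.rpow_one]
  field_simp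
  rw [← pow_mul, mul_comm m, pow_mul, neg_one_sq, one_pow, one_mul, hlam_shift]

/-- Laplace transform of the state probabilities of SDFPBP. -/
theorem sdfpbp_laplace_transform (lam : ℕ → ℝ) (hlam : ∀ m, 1 ≤ m → 0 < lam m)
    (ν : ℕ → ℝ) (hν : ∀ m, 1 ≤ m → 0 < ν m ∧ ν m ≤ 1)
    (n : ℕ) (hn : 1 ≤ n) (s : ℝ) (hs : 0 < s)
    (hsk : ∀ k, 1 ≤ k → k ≤ n → lam k < s ^ ν k) :
    ∫ t in Set.Ioi (0:ℝ), rBirth lam ν n t * Real.exp (-(s * t))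
      = s ^ (ν 1 - 1) * (∏ k ∈ Finset.Icc 1 (n - 1), lam k)
          / ∏ k ∈ Finset.Icc 1 n, (s ^ ν k + lam k) := by
  obtain ⟨m, rfl⟩ : ∃ m, n = m + 1 := ⟨n - 1, by omega⟩
  have hx (j : Fin (m + 1)) : 0 ≤ lam (j + 1) := (hlam _ (by omega)).le
  have hα (j : Fin (m + 1)) : 0 ≤ ν (j + 1) := (hν _ (by omega)).1.le
  have hz (j : Fin (m + 1)) : lam (j + 1) / s ^ ν (j + 1) < 1 :=
    (div_lt_one (Real.rpow_pos_of_pos hs _)).mpr (hsk _ (by omega) (by omega))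
  have hseries := integral_tsum_mittagLefflerTerm_mul_exp (fun j => min 1 j.val) hx hα hs hz
  simp only [← Lambda_eq_filter] at hseries
  simp only [rBirth_eq_tsum_mittagLefflerTerm, mul_assoc _ (∑' k, _), integral_const_mul,
    hseries, Nat.add_sub_cancel]
  exact sdfpbp_closed_form lam ν m hs hlam
end

section
/- Let λ > 0 and 0 < α ≤ 1. For every n ≥ 0 and t ≥ 0, (−1)^n ∑_{k=n}^∞ (−λ)^k C(k,n) t^{kα} / Γ(kα + 1) = ((λ t^α)^n / n!) ∑_{k=0}^∞ ((k+n)!/k!) (−λ t^α)^k / Γ((k+n)α + 1); that is, when α_j = α for all j, the state probabilities of SDTFPP-I reduce to the distribution of the time fractional Poisson process. -/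
/-- When all orders equal `α`, the state probabilities of SDTFPP-I reduce to the
distribution of the time fractional Poisson process.  (Note `C(k, n) = 0` for
`k < n`, so the series over all `k : ℕ` agrees with the series from `k = n`.) -/
theorem sdtfppI_reduces_to_tfpp (lam α : ℝ) (hlam : 0 < lam)
    (hα0 : 0 < α) (hα1 : α ≤ 1) (n : ℕ) (t : ℝ) (ht : 0 ≤ t) :
    (-1 : ℝ) ^ n *
        ∑' k : ℕ, (-lam) ^ k * (Nat.choose k n : ℝ) * t ^ ((k : ℝ) * α)
          / Real.Gamma ((k : ℝ) * α + 1)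
      = ((lam * t ^ α) ^ n / (Nat.factorial n : ℝ)) *
          ∑' k : ℕ, ((Nat.factorial (k + n) : ℝ) / (Nat.factorial k : ℝ)) *
            (-(lam * t ^ α)) ^ k / Real.Gamma (((k : ℝ) + (n : ℝ)) * α + 1) := by
  set f : ℕ → ℝ := fun k => (-lam) ^ k * (Nat.choose k n : ℝ) * t ^ ((k : ℝ) * α)
          / Real.Gamma ((k : ℝ) * α + 1) with hf
  have hinj : Function.Injective (fun j : ℕ => j + n) := fun a b h => by
    simpa using h
  have hsupp : Function.support f ⊆ Set.range (fun j : ℕ => j + n) := by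
    intro x hx
    by_contra hr
    have hxn : x < n := by
      by_contra h
      exact hr ⟨x - n, Nat.sub_add_cancel (not_lt.mp h)⟩
    exact hx (by simp [hf, Nat.choose_eq_zero_of_lt hxn])
  have h1 : (∑' k : ℕ, f k) = ∑' j : ℕ, f (j + n) :=
    (Function.Injective.tsum_eq hinj hsupp).symm
  have hrpow : ∀ m : ℕ, t ^ ((m : ℝ) * α) = (t ^ α) ^ m := by
    intro m
    rw [mul_comm, Real.rpow_mul ht, Real.rpow_natCast]
  rw [h1, ← tsum_mul_left, ← tsum_mul_left]
  refine tsum_congr fun j => ?_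
  have hG : Real.Gamma (((j : ℝ) + (n : ℝ)) * α + 1) ≠ 0 := by
    have : (0:ℝ) < ((j : ℝ) + (n : ℝ)) * α + 1 := by positivity
    exact (Real.Gamma_pos_of_pos this).ne'
  have hcast : ((j + n : ℕ) : ℝ) = (j : ℝ) + (n : ℝ) := by push_cast; ring
  have hchoose : ((j + n).choose n : ℝ) =
      ((j + n).factorial : ℝ) / ((n.factorial : ℝ) * (j.factorial : ℝ)) := by
    rw [Nat.cast_choose ℝ (Nat.le_add_left n j)]
    simp [Nat.add_sub_cancel]
  have hn : (n.factorial : ℝ) ≠ 0 := Nat.cast_ne_zero.mpr n.factorial_ne_zero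
  have hj : (j.factorial : ℝ) ≠ 0 := Nat.cast_ne_zero.mpr j.factorial_ne_zero
  have htα : (0:ℝ) ≤ t ^ α := Real.rpow_nonneg ht α
  simp only [hf, hcast, hrpow, hchoose]
  have hsign : (-lam) ^ (j + n) = (-1 : ℝ) ^ (j + n) * lam ^ (j + n) := by
    rw [neg_pow]
  have hsign2 : (-(lam * t ^ α)) ^ j = (-1 : ℝ) ^ j * (lam * t ^ α) ^ j := by
    rw [neg_pow]
  rw [hsign, hsign2]
  field_simp
  ring_nf
  rw [mul_comm n 2, pow_mul]
  norm_num
end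

section
/- Let n ≥ 0, let α_0 = 1, and let 0 < α_j ≤ 1 for 1 ≤ j ≤ n. Define f(t) = ∑_{k=n}^∞ (−1)^{n+k} ∑_{(k_0,…,k_n) ∈ Θ^k_n} t^{k_0 + ∑_{j=1}^n k_j α_j} / Γ(1 + k_0 + ∑_{j=1}^n k_j α_j) for t ≥ 0. Then for every s > 1, ∫₀^∞ e^{−st} f(t) dt = 1 / ∏_{j=0}^n (1 + s^{α_j}); that is, f is the density of the convolution T = X_0 + X_1 + ⋯ + X_n of independent Mittag-Leffler random variables X_j with Pr{X_j > t} = E_{α_j}(−t^{α_j}). -/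
open scoped BigOperators

/-!
Put `x_j = s ^ (-α_j) ∈ (0, 1)`. Since `∫₀^∞ e^{-st} t^β / Γ(1 + β) dt = s^{-(1+β)}` and `α_0 = 1`,
the term of `κ ∈ Θ^k_n` transforms into `s⁻¹ ∏_j x_j ^ κ_j`. Shifting by `(0, 1, …, 1)` identifies
`⋃_k Θ^k_n` with `ℕ^{n+1}`, so the transformed series (with the signs `(-1)^{n+k}`, resp. without)
is a product of `n + 1` geometric series. Without signs this gives the absolute convergence that
justifies integrating term by term; with signs it sums to
`s⁻¹ ∏_{j ≥ 1} x_j ∏_j (1 + x_j)⁻¹ = ∏_j x_j / (1 + x_j) = ∏_j 1 / (1 + s^{α_j})`.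
-/

section ProductOfSeries

variable {R β : Type*} [NormedCommRing R]

theorem summable_norm_prod_pi {m : ℕ} {f : Fin m → β → R} (hf : ∀ i, Summable (‖f i ·‖)) :
    Summable (fun g : Fin m → β => ‖∏ i, f i (g i)‖) := by
  induction m with
  | zero => exact summable_of_hasFiniteSupport (Set.toFinite _)
  | succ m ih =>
    have hprod := (hf 0).mul_norm (ih fun i => hf i.succ)
    rw [← (Fin.consEquiv fun _ => β).summable_iff]
    simpa only [Function.comp_def, Fin.consEquiv_apply, Fin.prod_univ_succ, Fin.cons_zero,
      Fin.cons_succ] using hprod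

theorem hasSum_prod_pi [CompleteSpace R] {m : ℕ} {f : Fin m → β → R} {a : Fin m → R}
    (hf : ∀ i, HasSum (f i) (a i)) (hnorm : ∀ i, Summable (‖f i ·‖)) :
    HasSum (fun g : Fin m → β => ∏ i, f i (g i)) (∏ i, a i) := by
  induction m with
  | zero => simp
  | succ m ih =>
    have hhead : Summable fun b => ‖f 0 b‖ := hnorm 0
    have htail : Summable fun g : Fin m → β => ‖∏ i, f i.succ (g i)‖ :=
      summable_norm_prod_pi fun i => hnorm i.succ
    have hrest : HasSum (fun g : Fin m → β => ∏ i, f i.succ (g i)) (∏ i : Fin m, a i.succ) :=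
      ih (fun i => hf i.succ) fun i => hnorm i.succ
    have hsummable := summable_mul_of_summable_norm hhead htail
    have hprod := (hf 0).mul hrest hsummable
    rw [Fin.prod_univ_succ, ← (Fin.consEquiv fun _ => β).hasSum_iff]
    simpa only [Function.comp_def, Fin.consEquiv_apply, Fin.prod_univ_succ, Fin.cons_zero,
      Fin.cons_succ] using hprod

end ProductOfSeries

theorem hasSum_prod_pow_pi {K : Type*} [NormedField K] [CompleteSpace K] {m : ℕ} {y : Fin m → K}
    (hy : ∀ i, ‖y i‖ < 1) :
    HasSum (fun g : Fin m → ℕ => ∏ i, y i ^ g i) (∏ i, (1 - y i)⁻¹) :=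
  hasSum_prod_pi (fun i => hasSum_geometric_of_norm_lt_one (hy i))
    (fun i => summable_norm_geometric_of_norm_lt_one (hy i))

-- `(0, 1, …, 1)`: `Theta n k` consists of the tuples above it with entry sum `k`
def thetaMin (n : ℕ) : Fin (n + 1) → ℕ := fun j => min j.val 1

theorem thetaMin_le_iff {n : ℕ} {κ : Fin (n + 1) → ℕ} :
    thetaMin n ≤ κ ↔ ∀ j : Fin (n + 1), 1 ≤ j.val → 1 ≤ κ j := by
  refine ⟨fun h j hj => ?_, fun h j => ?_⟩
  · have := h j; simp only [thetaMin] at this; omega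
  · have := h j; simp only [thetaMin]; omega

theorem sum_Theta_eq_sum_indicator {M : Type*} [AddCommMonoid M] (n k : ℕ)
    (f : (Fin (n + 1) → ℕ) → M) :
    ∑ κ ∈ Theta n k, f κ
      = ∑ κ ∈ Finset.Nat.antidiagonalTuple (n + 1) k, (Set.Ici (thetaMin n)).indicator f κ := by
  rw [Theta, Finset.sum_filter]
  refine Finset.sum_congr rfl fun κ _ => ?_
  by_cases h : thetaMin n ≤ κ
  · rw [if_pos (thetaMin_le_iff.mp h), Set.indicator_of_mem h]
  · rw [if_neg (mt thetaMin_le_iff.mpr h), Set.indicator_of_notMem h]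

theorem hasSum_sum_Theta {M : Type*} [AddCommMonoid M] [TopologicalSpace M] [RegularSpace M]
    [ContinuousAdd M] {n : ℕ} {f : (Fin (n + 1) → ℕ) → M} {a : M}
    (hf : HasSum (fun g => f (g + thetaMin n)) a) :
    HasSum (fun k => ∑ κ ∈ Theta n k, f κ) a := by
  have hind : HasSum ((Set.Ici (thetaMin n)).indicator f) a := by
    rw [← (add_left_injective (thetaMin n)).hasSum_iff]
    · simpa [Function.comp_def, Set.indicator_of_mem] using hf
    · intro κ hκ
      refine Set.indicator_of_notMem (fun hle => hκ ⟨κ - thetaMin n, ?_⟩) f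
      exact tsub_add_cancel_of_le hle
  refine ((Finset.Nat.sigmaAntidiagonalTupleEquivTuple (n + 1)).hasSum_iff.mpr hind).sigma
    fun k => ?_
  rw [sum_Theta_eq_sum_indicator, ← Finset.sum_coe_sort]
  exact hasSum_fintype _

theorem sum_eq_of_mem_Theta {n k : ℕ} {κ : Fin (n + 1) → ℕ} (hκ : κ ∈ Theta n k) :
    ∑ j, κ j = k :=
  Finset.Nat.mem_antidiagonalTuple.mp (Finset.mem_filter.mp hκ).1

theorem prod_pow_thetaMin {M : Type*} [CommMonoid M] {n : ℕ} (y : Fin (n + 1) → M) :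
    ∏ j, y j ^ thetaMin n j = ∏ i : Fin n, y i.succ := by
  simp [Fin.prod_univ_succ, thetaMin]

section Generating

variable {K : Type*} [NormedField K] [CompleteSpace K] {n : ℕ}

theorem hasSum_sum_Theta_prod_pow {y : Fin (n + 1) → K} (hy : ∀ j, ‖y j‖ < 1) :
    HasSum (fun k => ∑ κ ∈ Theta n k, ∏ j, y j ^ κ j)
      ((∏ i : Fin n, y i.succ) * ∏ j, (1 - y j)⁻¹) := by
  refine hasSum_sum_Theta (((hasSum_prod_pow_pi hy).mul_left _).congr_fun fun g => ?_)
  rw [mul_comm]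
  simp only [Pi.add_apply, pow_add, Finset.prod_mul_distrib, prod_pow_thetaMin]

theorem hasSum_neg_one_pow_mul_sum_Theta_prod_pow {x : Fin (n + 1) → K} (hx : ∀ j, ‖x j‖ < 1) :
    HasSum (fun k => (-1) ^ (n + k) * ∑ κ ∈ Theta n k, ∏ j, x j ^ κ j)
      ((∏ i : Fin n, x i.succ) * ∏ j, (1 + x j)⁻¹) := by
  have hneg := (hasSum_sum_Theta_prod_pow (y := -x) (by simpa using hx)).mul_left ((-1) ^ n)
  have hvalue : (∏ i : Fin n, x i.succ) * ∏ j, (1 + x j)⁻¹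
      = (-1) ^ n * ((∏ i : Fin n, -x i.succ) * ∏ j, (1 - -x j)⁻¹) := by
    rw [Finset.prod_neg, Finset.card_univ, Fintype.card_fin, ← mul_assoc, ← mul_assoc, ← pow_add,
      Even.neg_one_pow ⟨n, rfl⟩, one_mul]
    simp only [sub_neg_eq_add]
  rw [hvalue]
  refine hneg.congr_fun fun k => ?_
  rw [pow_add, mul_assoc]
  congr 1
  rw [Finset.mul_sum]
  refine Finset.sum_congr rfl fun κ hκ => ?_
  rw [← sum_eq_of_mem_Theta hκ, ← Finset.prod_pow_eq_pow_sum, ← Finset.prod_mul_distrib]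
  exact Finset.prod_congr rfl fun j _ => (neg_pow (x j) (κ j)).symm

end Generating

section Laplace

open MeasureTheory Real Set

variable {ι : Type*} {s : ℝ} {β : ι → ℝ}

theorem integrableOn_exp_neg_mul_mul_rpow_div_Gamma (hs : 0 < s) {b : ℝ} (hb : -1 < b) :
    IntegrableOn (fun t => exp (-(s * t)) * (t ^ b / Gamma (1 + b))) (Ioi 0) := by
  have h : IntegrableOn (fun t => t ^ b * exp (-s * t ^ (1 : ℝ)) / Gamma (1 + b)) (Ioi 0) :=
    (integrableOn_rpow_mul_exp_neg_mul_rpow hb one_pos hs).div_const _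
  refine h.congr_fun (fun t _ => ?_) measurableSet_Ioi
  dsimp only
  rw [rpow_one, neg_mul]
  ring

theorem integral_exp_neg_mul_mul_rpow_div_Gamma (hs : 0 < s) {b : ℝ} (hb : -1 < b) :
    ∫ t in Ioi 0, exp (-(s * t)) * (t ^ b / Gamma (1 + b)) = s ^ (-(1 + b)) := by
  have hGamma : Gamma (1 + b) ≠ 0 := (Gamma_pos_of_pos (by linarith)).ne'
  have h := integral_rpow_mul_exp_neg_mul_Ioi (a := 1 + b) (by linarith) hs
  rw [add_sub_cancel_left, one_div, inv_rpow hs.le, ← rpow_neg hs.le] at h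
  simp_rw [mul_div_assoc', mul_comm (exp _), integral_div, h]
  field_simp

theorem exp_neg_mul_mul_sum_eq (S : Finset ι) (c t : ℝ) :
    exp (-(s * t)) * (c * ∑ i ∈ S, t ^ β i / Gamma (1 + β i))
      = ∑ i ∈ S, c * (exp (-(s * t)) * (t ^ β i / Gamma (1 + β i))) := by
  rw [Finset.mul_sum, Finset.mul_sum]
  exact Finset.sum_congr rfl fun i _ => by ring

theorem integrableOn_exp_neg_mul_mul_sum (hs : 0 < s) (S : Finset ι) (c : ℝ)
    (hβ : ∀ i ∈ S, -1 < β i) :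
    IntegrableOn (fun t => exp (-(s * t)) * (c * ∑ i ∈ S, t ^ β i / Gamma (1 + β i))) (Ioi 0) := by
  simp_rw [exp_neg_mul_mul_sum_eq]
  exact integrable_finsetSum _ fun i hi =>
    (integrableOn_exp_neg_mul_mul_rpow_div_Gamma hs (hβ i hi)).const_mul c

theorem integral_exp_neg_mul_mul_sum (hs : 0 < s) (S : Finset ι) (c : ℝ)
    (hβ : ∀ i ∈ S, -1 < β i) :
    ∫ t in Ioi 0, exp (-(s * t)) * (c * ∑ i ∈ S, t ^ β i / Gamma (1 + β i))
      = c * ∑ i ∈ S, s ^ (-(1 + β i)) := by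
  simp_rw [exp_neg_mul_mul_sum_eq]
  rw [integral_finsetSum _ fun i hi =>
    (integrableOn_exp_neg_mul_mul_rpow_div_Gamma hs (hβ i hi)).const_mul c, Finset.mul_sum]
  exact Finset.sum_congr rfl fun i hi => by
    rw [integral_const_mul, integral_exp_neg_mul_mul_rpow_div_Gamma hs (hβ i hi)]

theorem integral_norm_exp_neg_mul_mul_sum (hs : 0 < s) (S : Finset ι) (c : ℝ)
    (hβ : ∀ i ∈ S, -1 < β i) :
    ∫ t in Ioi 0, ‖exp (-(s * t)) * (c * ∑ i ∈ S, t ^ β i / Gamma (1 + β i))‖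
      = |c| * ∑ i ∈ S, s ^ (-(1 + β i)) := by
  rw [← integral_exp_neg_mul_mul_sum hs S |c| hβ]
  refine setIntegral_congr_fun measurableSet_Ioi fun t ht => ?_
  have hsum : 0 ≤ ∑ i ∈ S, t ^ β i / Gamma (1 + β i) := Finset.sum_nonneg fun i hi =>
    div_nonneg (rpow_nonneg (le_of_lt ht) _) (Gamma_pos_of_pos (by linarith [hβ i hi])).le
  rw [norm_mul, norm_mul, norm_of_nonneg (exp_pos _).le, norm_of_nonneg hsum, Real.norm_eq_abs]

theorem integral_exp_neg_mul_mul_tsum (hs : 0 < s) (S : ℕ → Finset ι) (c : ℕ → ℝ)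
    (hβ : ∀ k, ∀ i ∈ S k, -1 < β i)
    (hsum : Summable fun k => |c k| * ∑ i ∈ S k, s ^ (-(1 + β i))) :
    ∫ t in Ioi 0, exp (-(s * t)) * ∑' k, c k * ∑ i ∈ S k, t ^ β i / Gamma (1 + β i)
      = ∑' k, c k * ∑ i ∈ S k, s ^ (-(1 + β i)) := by
  simp_rw [← tsum_mul_left]
  rw [← integral_tsum_of_summable_integral_norm
    (fun k => integrableOn_exp_neg_mul_mul_sum hs (S k) (c k) (hβ k))
    (hsum.congr fun k => (integral_norm_exp_neg_mul_mul_sum hs (S k) (c k) (hβ k)).symm)]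
  exact tsum_congr fun k => integral_exp_neg_mul_mul_sum hs (S k) (c k) (hβ k)

end Laplace

theorem rpow_neg_sum_mul_eq_prod {ι : Type*} (T : Finset ι) {s : ℝ} (hs : 0 < s) (κ : ι → ℕ)
    (a : ι → ℝ) : s ^ (-∑ j ∈ T, (κ j : ℝ) * a j) = ∏ j ∈ T, (s ^ (-a j)) ^ κ j := by
  rw [← Finset.sum_neg_distrib, Real.rpow_sum_of_pos hs]
  exact Finset.prod_congr rfl fun j _ => by
    rw [← Real.rpow_mul_natCast hs.le, neg_mul_eq_mul_neg, mul_comm]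

theorem cast_add_sum_erase_zero_eq_sum {n : ℕ} {α : ℕ → ℝ} (hα0 : α 0 = 1)
    (κ : Fin (n + 1) → ℕ) :
    (κ 0 : ℝ) + ∑ j ∈ Finset.univ.erase (0 : Fin (n + 1)), (κ j : ℝ) * α j.val
      = ∑ j, (κ j : ℝ) * α j.val := by
  rw [← Finset.add_sum_erase _ _ (Finset.mem_univ 0), Fin.val_zero, hα0, mul_one]

section Series

open Real

variable {n : ℕ} {α : ℕ → ℝ} {s : ℝ}

theorem norm_rpow_neg_lt_one (hs : 1 < s) {a : ℝ} (ha : 0 < a) : ‖s ^ (-a)‖ < 1 := by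
  rw [norm_of_nonneg (rpow_nonneg (by linarith) _)]
  exact rpow_lt_one_of_one_lt_of_neg hs (neg_neg_of_pos ha)

theorem rpow_neg_mul_inv_one_add_rpow_neg (hs : 0 < s) (a : ℝ) :
    s ^ (-a) * (1 + s ^ (-a))⁻¹ = (1 + s ^ a)⁻¹ := by
  rw [rpow_neg hs.le]
  field_simp
  ring

theorem rpow_neg_one_add_sum_mul_eq (hs : 0 < s) (κ : Fin (n + 1) → ℕ) :
    s ^ (-(1 + ∑ j, (κ j : ℝ) * α j)) = s⁻¹ * ∏ j : Fin (n + 1), (s ^ (-α j)) ^ κ j := by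
  rw [neg_add, rpow_add hs, rpow_neg_one, rpow_neg_sum_mul_eq_prod _ hs]

theorem summable_abs_mul_sum_Theta_rpow_neg (hs : 1 < s) (hα : ∀ j : Fin (n + 1), 0 < α j) :
    Summable fun k => |(-1 : ℝ) ^ (n + k)| *
      ∑ κ ∈ Theta n k, s ^ (-(1 + ∑ j, (κ j : ℝ) * α j)) := by
  refine ((hasSum_sum_Theta_prod_pow fun j => norm_rpow_neg_lt_one hs (hα j)).summable.mul_left
    s⁻¹).congr fun k => ?_
  rw [abs_pow, abs_neg, abs_one, one_pow, one_mul, Finset.mul_sum]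
  exact Finset.sum_congr rfl fun κ _ => (rpow_neg_one_add_sum_mul_eq (by linarith) κ).symm

theorem hasSum_neg_one_pow_mul_sum_Theta_rpow_neg (hs : 1 < s) (hα0 : α 0 = 1)
    (hα : ∀ j : Fin (n + 1), 0 < α j) :
    HasSum (fun k => (-1 : ℝ) ^ (n + k) * ∑ κ ∈ Theta n k, s ^ (-(1 + ∑ j, (κ j : ℝ) * α j)))
      (1 / ∏ j ∈ Finset.range (n + 1), (1 + s ^ α j)) := by
  have hs0 : 0 < s := by linarith
  set x : Fin (n + 1) → ℝ := fun j => s ^ (-α j) with hx_def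
  have hx0 : x 0 = s⁻¹ := by simp only [hx_def, Fin.val_zero, hα0, rpow_neg_one]
  have hvalue : s⁻¹ * ((∏ i : Fin n, x i.succ) * ∏ j, (1 + x j)⁻¹)
      = 1 / ∏ j ∈ Finset.range (n + 1), (1 + s ^ α j) :=
    calc s⁻¹ * ((∏ i : Fin n, x i.succ) * ∏ j, (1 + x j)⁻¹)
        = ∏ j, x j * (1 + x j)⁻¹ := by
          rw [← mul_assoc, ← hx0, ← Fin.prod_univ_succ, Finset.prod_mul_distrib]
      _ = ∏ j : Fin (n + 1), (1 + s ^ α j)⁻¹ :=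
          Finset.prod_congr rfl fun j _ => rpow_neg_mul_inv_one_add_rpow_neg hs0 _
      _ = 1 / ∏ j ∈ Finset.range (n + 1), (1 + s ^ α j) := by
          rw [Finset.prod_inv_distrib, Fin.prod_univ_eq_prod_range (fun j => 1 + s ^ α j), one_div]
  rw [← hvalue]
  refine ((hasSum_neg_one_pow_mul_sum_Theta_prod_pow fun j =>
    norm_rpow_neg_lt_one hs (hα j)).mul_left s⁻¹).congr_fun fun k => ?_
  simp only [rpow_neg_one_add_sum_mul_eq hs0, ← Finset.mul_sum]
  ring

end Series

/-- The density of the convolution of `n + 1` independent rate-one Mittag-Leffler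
random variables of orders `1, α_1, …, α_n` has Laplace transform
`1 / ∏_{j=0}^n (1 + s^{α_j})`, where `α_0 = 1`. -/
theorem convolution_mittagLeffler_laplace (n : ℕ) (α : ℕ → ℝ) (hα0 : α 0 = 1)
    (hα : ∀ j, 1 ≤ j → j ≤ n → 0 < α j ∧ α j ≤ 1) :
    ∀ s : ℝ, 1 < s →
      ∫ t in Set.Ioi (0:ℝ),
          Real.exp (-(s * t)) *
            ∑' k : ℕ, (-1 : ℝ) ^ (n + k) *
              ∑ κ ∈ Theta n k,
                t ^ ((κ 0 : ℝ) + ∑ j ∈ Finset.univ.erase (0 : Fin (n + 1)),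
                      (κ j : ℝ) * α j.val)
                  / Real.Gamma (1 + (κ 0 : ℝ) + ∑ j ∈ Finset.univ.erase (0 : Fin (n + 1)),
                      (κ j : ℝ) * α j.val)
        = 1 / ∏ j ∈ Finset.range (n + 1), (1 + s ^ α j) := by
  intro s hs
  have hα' : ∀ j : Fin (n + 1), 0 < α j := fun j => by
    rcases Nat.eq_zero_or_pos j.val with h0 | h0
    · rw [h0, hα0]; exact one_pos
    · exact (hα j h0 (by omega)).1
  have hβ : ∀ k, ∀ κ ∈ Theta n k, -1 < ∑ j, (κ j : ℝ) * α j := fun k κ _ => by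
    have : 0 ≤ ∑ j, (κ j : ℝ) * α j :=
      Finset.sum_nonneg fun j _ => mul_nonneg (Nat.cast_nonneg _) (hα' j).le
    linarith
  simp only [add_assoc, cast_add_sum_erase_zero_eq_sum hα0]
  rw [integral_exp_neg_mul_mul_tsum (by linarith) (Theta n) _ hβ
    (summable_abs_mul_sum_Theta_rpow_neg hs hα')]
  exact (hasSum_neg_one_pow_mul_sum_Theta_rpow_neg hs hα0 hα').tsum_eq
end
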